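/- arXiv:2210.12371 — 6 statements merged into one kernel-verified Lean document; each statement's English description precedes it below -/
import Mathlib

section
/- Let T_1 be a tournament with score vector s = (s_1,...,s_n) in which vertex v_i beats vertex v_j, and let T_2 be the tournament obtained from T_1 by reversing the arc between v_i and v_j. Then C_3(T_2) - C_3(T_1) = s_i - s_j - 1. -/
open scoped Classical

/-- A tournament matrix: a (0,1)-matrix with `M + M.transpose = J - I`. -/
def IsTournament {ι : Type} [Fintype ι] [DecidableEq ι] (M : Matrix ι ι ℤ) : Prop :=
  (∀ i j, M i j = 0 ∨ M i j = 1) ∧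
    M + M.transpose = Matrix.of (fun i j => if i = j then 0 else 1)

/-- The score (out-degree) of vertex `i`. -/
def score {ι : Type} [Fintype ι] (M : Matrix ι ι ℤ) (i : ι) : ℕ := (∑ j, M i j).toNat

/-- The number of directed 3-cycles: ordered triples `i→j→k→i`, divided by 3. -/
noncomputable def C3 {ι : Type} [Fintype ι] [DecidableEq ι] (M : Matrix ι ι ℤ) : ℕ :=
  (Finset.univ.filter (fun p : ι × ι × ι =>
    M p.1 p.2.1 = 1 ∧ M p.2.1 p.2.2 = 1 ∧ M p.2.2 p.1 = 1)).card / 3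

/-- Vertices `i` and `j` are strongly connected. -/
def SConn {ι : Type} [Fintype ι] (M : Matrix ι ι ℤ) (i j : ι) : Prop :=
  Relation.ReflTransGen (fun a b => M a b = 1) i j ∧
    Relation.ReflTransGen (fun a b => M a b = 1) j i

/-- The strongly connected components (as vertex sets). -/
noncomputable def sccs {ι : Type} [Fintype ι] [DecidableEq ι] (M : Matrix ι ι ℤ) :
    Finset (Finset ι) :=
  Finset.univ.image (fun i => Finset.univ.filter (fun j => SConn M i j))

/-- The principal submatrix on a vertex set `V`. -/
def subm {ι : Type} [Fintype ι] [DecidableEq ι] (M : Matrix ι ι ℤ) (V : Finset ι) :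
    Matrix {x // x ∈ V} {x // x ∈ V} ℤ :=
  M.submatrix Subtype.val Subtype.val

/-- A regular tournament: all scores equal. -/
def TRegular {ι : Type} [Fintype ι] (M : Matrix ι ι ℤ) : Prop :=
  ∀ i j, score M i = score M j

/-- An almost regular tournament: scores differ by at most 1. -/
def TAlmostRegular {ι : Type} [Fintype ι] (M : Matrix ι ι ℤ) : Prop :=
  ∀ i j, score M i ≤ score M j + 1

/-- An upset tournament: a tournament on at least 3 vertices whose score vector is
`(1,1,2,3,…,n-3,n-2,n-2)`. -/
def IsUpset {ι : Type} [Fintype ι] [DecidableEq ι] (M : Matrix ι ι ℤ) : Prop :=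
  IsTournament M ∧ 3 ≤ Fintype.card ι ∧
    Finset.univ.val.map (score M) =
      1 ::ₘ (Fintype.card ι - 2) ::ₘ (Multiset.range (Fintype.card ι - 2)).map (· + 1)


open Finset Matrix

/-- Trace against a standard basis matrix on the right. -/
private lemma trace_sb {n : ℕ} (A : Matrix (Fin n) (Fin n) ℤ) (a b : Fin n) :
    Matrix.trace (A * Matrix.single a b (1 : ℤ)) = A b a := by
  rw [Matrix.trace]
  rw [Finset.sum_eq_single b]
  · simp [Matrix.diag]
  · intro k _ hk
    simp [Matrix.diag, Matrix.mul_single_apply_of_ne 1 a b k k hk A]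
  · simp

/-- A rotation-invariant set of triples with pairwise-distinct coordinates has
cardinality divisible by 3. -/
private lemma card_div3 {ι : Type} [DecidableEq ι] (S : Finset (ι × ι × ι))
    (hrot : ∀ p ∈ S, (p.2.1, p.2.2, p.1) ∈ S)
    (hne : ∀ p ∈ S, p.1 ≠ p.2.1 ∧ p.2.1 ≠ p.2.2 ∧ p.2.2 ≠ p.1) :
    3 ∣ S.card := by
  generalize hm : S.card = m
  induction m using Nat.strong_induction_on generalizing S with
  | _ m ih =>
  rcases S.eq_empty_or_nonempty with rfl | ⟨⟨a, b, c⟩, hp⟩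
  · simp at hm; omega
  obtain ⟨h1, h2, h3⟩ := hne _ hp
  simp only [ne_eq] at h1 h2 h3
  set O : Finset (ι × ι × ι) := {(a, b, c), (b, c, a), (c, a, b)} with hO
  have hmem1 : ((b, c, a) : ι × ι × ι) ∈ S := hrot _ hp
  have hmem2 : ((c, a, b) : ι × ι × ι) ∈ S := hrot _ hmem1
  have hOsub : O ⊆ S := by
    intro q hq
    simp only [hO, Finset.mem_insert, Finset.mem_singleton] at hq
    rcases hq with rfl | rfl | rfl <;> assumption
  have hOcard : O.card = 3 := by
    rw [hO, Finset.card_insert_of_notMem (by simp [Prod.ext_iff]; tauto),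
      Finset.card_insert_of_notMem (by simp [Prod.ext_iff]; tauto),
      Finset.card_singleton]
  have hrot' : ∀ p ∈ S \ O, (p.2.1, p.2.2, p.1) ∈ S \ O := by
    rintro ⟨x, y, z⟩ hq
    rw [Finset.mem_sdiff] at hq ⊢
    obtain ⟨hqS, hqO⟩ := hq
    refine ⟨hrot _ hqS, ?_⟩
    simp only [hO, Finset.mem_insert, Finset.mem_singleton, Prod.ext_iff] at hqO ⊢
    tauto
  have hne' : ∀ p ∈ S \ O, p.1 ≠ p.2.1 ∧ p.2.1 ≠ p.2.2 ∧ p.2.2 ≠ p.1 :=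
    fun p hp => hne p (Finset.mem_sdiff.mp hp).1
  have hcard : (S \ O).card = m - 3 := by
    rw [Finset.card_sdiff_of_subset hOsub, hOcard, hm]
  have h3m : 3 ≤ m := by
    have := Finset.card_le_card hOsub
    omega
  have := ih (m - 3) (by omega) (S \ O) hrot' hne' hcard
  omega

/-- The number of cyclic ordered triples equals the trace of the cube. -/
private lemma card_cyc {n : ℕ} (M : Matrix (Fin n) (Fin n) ℤ)
    (h01 : ∀ a b, M a b = 0 ∨ M a b = 1) :
    ((Finset.univ.filter (fun p : Fin n × Fin n × Fin n =>
      M p.1 p.2.1 = 1 ∧ M p.2.1 p.2.2 = 1 ∧ M p.2.2 p.1 = 1)).card : ℤ)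
      = Matrix.trace (M * M * M) := by
  have key : ∀ a b c : Fin n, (if M a b = 1 ∧ M b c = 1 ∧ M c a = 1 then (1 : ℤ) else 0)
      = M a b * M b c * M c a := by
    intro a b c
    rcases h01 a b with h | h <;> rcases h01 b c with h' | h' <;>
      rcases h01 c a with h'' | h'' <;> simp [h, h', h'']
  rw [Finset.natCast_card_filter]
  rw [Fintype.sum_prod_type]
  have hL : ∀ a : Fin n, (∑ p : Fin n × Fin n,
      if M a p.1 = 1 ∧ M p.1 p.2 = 1 ∧ M p.2 a = 1 then (1 : ℤ) else 0)
      = ∑ b, ∑ c, M a b * M b c * M c a := by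
    intro a
    rw [Fintype.sum_prod_type]
    exact Finset.sum_congr rfl fun b _ => Finset.sum_congr rfl fun c _ => key a b c
  simp only [hL]
  rw [Matrix.trace]
  refine Finset.sum_congr rfl fun a _ => ?_
  rw [Matrix.diag_apply, Matrix.mul_apply]
  simp only [Matrix.mul_apply, Finset.sum_mul]
  rw [Finset.sum_comm]

theorem stmt1 (n : ℕ) (M N : Matrix (Fin n) (Fin n) ℤ)
    (hM : IsTournament M) (hN : IsTournament N) (i j : Fin n) (hij : i ≠ j)
    (harc : M i j = 1) (hrev : N i j = 0) (hrev' : N j i = 1)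
    (hother : ∀ a b : Fin n, ({a, b} : Finset (Fin n)) ≠ {i, j} → N a b = M a b) :
    (C3 N : ℤ) - (C3 M : ℤ) = (score M i : ℤ) - (score M j : ℤ) - 1 := by
  obtain ⟨h01M, hMt⟩ := hM
  obtain ⟨h01N, hNt⟩ := hN
  have hMrel : ∀ a b, M a b + M b a = if a = b then 0 else 1 := by
    intro a b
    have := congrFun (congrFun hMt a) b
    simpa using this
  have hNrel : ∀ a b, N a b + N b a = if a = b then 0 else 1 := by
    intro a b
    have := congrFun (congrFun hNt a) b
    simpa using this
  have hMdiag : ∀ a, M a a = 0 := by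
    intro a; have := hMrel a a; simp at this; linarith
  have hNdiag : ∀ a, N a a = 0 := by
    intro a; have := hNrel a a; simp at this; linarith
  have hMji : M j i = 0 := by
    have := hMrel i j; rw [if_neg hij] at this; linarith
  -- the perturbation matrix
  set D : Matrix (Fin n) (Fin n) ℤ :=
    Matrix.single j i 1 - Matrix.single i j 1 with hD
  have hNeq : N = M + D := by
    ext a b
    by_cases hab1 : a = i ∧ b = j
    · obtain ⟨rfl, rfl⟩ := hab1
      simp [hD, Matrix.single, hij, Ne.symm hij, hrev, harc]
    by_cases hab2 : a = j ∧ b = i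
    · obtain ⟨rfl, rfl⟩ := hab2
      simp [hD, Matrix.single, hij, Ne.symm hij, hrev', hMji]
    · have hpair : ({a, b} : Finset (Fin n)) ≠ {i, j} := by
        intro hpair
        have ha : a = i ∨ a = j := by
          have : a ∈ ({i, j} : Finset (Fin n)) := hpair ▸ Finset.mem_insert_self a {b}
          simpa using this
        have hb : b = i ∨ b = j := by
          have : b ∈ ({i, j} : Finset (Fin n)) :=
            hpair ▸ Finset.mem_insert_of_mem (Finset.mem_singleton_self b)
          simpa using this
        have hjmem : j = a ∨ j = b := by
          have : j ∈ ({a, b} : Finset (Fin n)) := by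
            rw [hpair]; simp
          simpa using this
        have himem : i = a ∨ i = b := by
          have : i ∈ ({a, b} : Finset (Fin n)) := by
            rw [hpair]; simp
          simpa using this
        rcases ha with rfl | rfl <;> rcases hb with rfl | rfl <;> tauto
      rw [hother a b hpair]
      have e1 : ¬(j = a ∧ i = b) := by tauto
      have e2 : ¬(i = a ∧ j = b) := by tauto
      simp [hD, Matrix.single, e1, e2]
  -- trace expansion
  have cube : (M + D) * (M + D) * (M + D)
      = M * M * M + (M * M * D + M * D * M + D * M * M)
        + (M * D * D + D * M * D + D * D * M) + D * D * D := by
    noncomm_ring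
  have hDD : D * D = -(Matrix.single j j (1 : ℤ) + Matrix.single i i 1) := by
    rw [hD]
    rw [sub_mul, mul_sub, mul_sub]
    rw [Matrix.single_mul_single_of_ne _ _ _ _ (Ne.symm hij),
      Matrix.single_mul_single_of_ne _ _ _ _ hij,
      Matrix.single_mul_single_same, Matrix.single_mul_single_same]
    simp
    abel
  have trMMD : Matrix.trace (M * M * D) = (M * M) i j - (M * M) j i := by
    rw [hD, mul_sub, Matrix.trace_sub, trace_sb, trace_sb]
  have trMDD : Matrix.trace (M * D * D) = 0 := by
    rw [Matrix.mul_assoc, hDD]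
    simp only [mul_neg, Matrix.trace_neg, mul_add, Matrix.trace_add, trace_sb]
    rw [hMdiag, hMdiag]; ring
  have trDDD : Matrix.trace (D * D * D) = 0 := by
    rw [Matrix.mul_assoc, hDD]
    simp only [mul_neg, Matrix.trace_neg, mul_add, Matrix.trace_add, trace_sb]
    have : D j j = 0 := by simp [hD, Matrix.single, hij, Ne.symm hij]
    have h2 : D i i = 0 := by simp [hD, Matrix.single, hij, Ne.symm hij]
    rw [this, h2]; ring
  have c1 : Matrix.trace (M * D * M) = Matrix.trace (M * M * D) :=
    Matrix.trace_mul_cycle M D M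
  have c2 : Matrix.trace (D * M * M) = Matrix.trace (M * M * D) := by
    rw [Matrix.trace_mul_cycle D M M, c1]
  have c3 : Matrix.trace (D * M * D) = Matrix.trace (M * D * D) :=
    (Matrix.trace_mul_cycle M D D).symm
  have c4 : Matrix.trace (D * D * M) = Matrix.trace (M * D * D) :=
    Matrix.trace_mul_cycle D D M
  have expand : Matrix.trace (N * N * N) - Matrix.trace (M * M * M)
      = 3 * ((M * M) i j - (M * M) j i) := by
    rw [hNeq, cube]
    simp only [Matrix.trace_add]
    rw [c1, c2, c3, c4, trMMD, trMDD, trDDD]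
    ring
  -- scores
  have hsi : (score M i : ℤ) = ∑ k, M i k := by
    rw [score, Int.toNat_of_nonneg]
    exact Finset.sum_nonneg fun k _ => by rcases h01M i k with h | h <;> simp [h]
  have hsj : (score M j : ℤ) = ∑ k, M j k := by
    rw [score, Int.toNat_of_nonneg]
    exact Finset.sum_nonneg fun k _ => by rcases h01M j k with h | h <;> simp [h]
  have key : ∀ k, M i k * M k j - M j k * M k i
      = (if k = j then 0 else M i k) - (if k = i then 0 else M j k) := by
    intro k
    have hkj := hMrel k j
    have hki := hMrel k i
    split_ifs with e1 e2 e2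
    · exact absurd (e1.symm.trans e2) (Ne.symm hij)
    · rw [e1]; simp [hMdiag]
    · rw [e2]; simp [hMdiag]
    · rw [if_neg e1] at hkj
      rw [if_neg e2] at hki
      linear_combination M i k * hkj - M j k * hki
  have hMMij : (M * M) i j - (M * M) j i
      = (score M i : ℤ) - (score M j : ℤ) - 1 := by
    rw [Matrix.mul_apply, Matrix.mul_apply, ← Finset.sum_sub_distrib]
    have : ∀ k, M i k * M k j - M j k * M k i
        = (M i k - M j k) - ((if k = j then M i k else 0) - (if k = i then M j k else 0)) := by
      intro k
      rw [key k]
      split_ifs <;> ring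
    simp only [this]
    rw [Finset.sum_sub_distrib, Finset.sum_sub_distrib, Finset.sum_sub_distrib]
    rw [Finset.sum_ite_eq' Finset.univ j (fun k => M i k),
      Finset.sum_ite_eq' Finset.univ i (fun k => M j k)]
    simp only [Finset.mem_univ, if_true]
    rw [hsi, hsj, harc, hMji]
    ring
  -- counting
  have hcardM := card_cyc M h01M
  have hcardN := card_cyc N h01N
  have hdvd : ∀ (P : Matrix (Fin n) (Fin n) ℤ), (∀ a, P a a = 0) →
      3 ∣ (Finset.univ.filter (fun p : Fin n × Fin n × Fin n =>
        P p.1 p.2.1 = 1 ∧ P p.2.1 p.2.2 = 1 ∧ P p.2.2 p.1 = 1)).card := by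
    intro P hPd
    apply card_div3
    · rintro ⟨a, b, c⟩ hp
      simp only [Finset.mem_filter, Finset.mem_univ, true_and] at hp ⊢
      tauto
    · rintro ⟨a, b, c⟩ hp
      simp only [Finset.mem_filter, Finset.mem_univ, true_and] at hp
      obtain ⟨e1, e2, e3⟩ := hp
      refine ⟨fun h => ?_, fun h => ?_, fun h => ?_⟩ <;> simp only at h
      · rw [h] at e1; rw [hPd] at e1; exact one_ne_zero e1.symm
      · rw [h] at e2; rw [hPd] at e2; exact one_ne_zero e2.symm
      · rw [h] at e3; rw [hPd] at e3; exact one_ne_zero e3.symm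
  have hdM := hdvd M hMdiag
  have hdN := hdvd N hNdiag
  have h3M : (C3 M : ℤ) * 3 = Matrix.trace (M * M * M) := by
    rw [← hcardM, C3]
    exact_mod_cast Nat.div_mul_cancel hdM
  have h3N : (C3 N : ℤ) * 3 = Matrix.trace (N * N * N) := by
    rw [← hcardN, C3]
    exact_mod_cast Nat.div_mul_cancel hdN
  rw [hMMij] at expand
  linarith
end

section
/- Every tournament matrix M of order n satisfies C_3(M) ≤ (1/4)·C(n+1,3) if n is odd, and C_3(M) ≤ 2·C(n/2+1,3) if n is even. -/
open scoped Classical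

lemma choose2aux (k : ℕ) : 2 * (k+1).choose 2 = (k+1) * k := by
  induction k with
  | zero => simp
  | succ k ih =>
    have h : (k+1+1).choose 2 = (k+1).choose 1 + (k+1).choose 2 :=
      Nat.choose_succ_succ (k+1) 1
    rw [h, Nat.choose_one_right]
    nlinarith [ih]

lemma choose3aux (k : ℕ) : 6 * (k+2).choose 3 = (k+2) * (k+1) * k := by
  induction k with
  | zero => simp
  | succ k ih =>
    have h : (k+2+1).choose 3 = (k+2).choose 2 + (k+2).choose 3 :=
      Nat.choose_succ_succ (k+2) 2
    have h2 := choose2aux (k+1)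
    rw [h]
    nlinarith [ih, h2]

lemma arith_odd (N K n m : ℕ) (hn : n = 2*m+1) (h8 : 8*N + n ≤ n^3)
    (h6 : 6*K = (2*m+2)*(2*m+1)*(2*m)) : 4*(N/3) ≤ K := by
  subst hn
  have h4 : 4 * N ≤ 3 * K := by nlinarith [h8, h6]
  omega

lemma arith_even (N K n k : ℕ) (hn : n = 2*(k+1)) (h8 : 8*N + 4*n ≤ n^3)
    (h6 : 6*K = (k+2)*(k+1)*k) : N/3 ≤ 2*K := by
  subst hn
  have h4 : N ≤ 6 * K := by nlinarith [h8, h6]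
  omega

theorem stmt2 (n : ℕ) (M : Matrix (Fin n) (Fin n) ℤ) (hM : IsTournament M) :
    (Odd n → 4 * C3 M ≤ (n + 1).choose 3) ∧
    (Even n → C3 M ≤ 2 * (n / 2 + 1).choose 3) := by
  obtain ⟨h01, heq⟩ := hM
  have hdiag : ∀ i, M i i = 0 := by
    intro i
    have h := congrFun (congrFun heq i) i
    simp [Matrix.add_apply, Matrix.transpose_apply] at h
    omega
  have hpair : ∀ i j, i ≠ j → M i j + M j i = 1 := by
    intro i j hij
    have h := congrFun (congrFun heq i) j
    simpa [Matrix.add_apply, Matrix.transpose_apply, hij] using h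
  have hprod0 : ∀ i j, M i j * M j i = 0 := by
    intro i j
    by_cases h : i = j
    · subst h; simp [hdiag]
    · rcases h01 i j with h1 | h1
      · simp [h1]
      · rcases h01 j i with h2 | h2
        · simp [h2]
        · exfalso; have := hpair i j h; rw [h1, h2] at this; norm_num at this
  have hsq : ∀ i j, M i j * M i j = M i j := by
    intro i j; rcases h01 i j with h | h <;> simp [h]
  -- scores as integers
  set s : Fin n → ℤ := fun i => ∑ j, M i j with hs
  set S1 : ℤ := ∑ i, s i with hS1def
  set S2 : ℤ := ∑ i, s i * s i with hS2def
  -- column sums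
  have hcol : ∀ j, (∑ i, M i j) = ((n : ℤ) - 1) - s j := by
    intro j
    have h1 : ∑ i, (M i j + M j i) = (n : ℤ) - 1 := by
      have hpt : ∀ i, M i j + M j i = if i = j then 0 else 1 := by
        intro i
        by_cases h : i = j
        · subst h; simp [hdiag]
        · rw [if_neg h]; exact hpair i j h
      rw [Finset.sum_congr rfl (fun i _ => hpt i)]
      have : ∀ i : Fin n, (if i = j then (0:ℤ) else 1) = 1 - (if i = j then 1 else 0) := by
        intro i; split <;> ring
      rw [Finset.sum_congr rfl (fun i _ => this i), Finset.sum_sub_distrib]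
      simp [Finset.sum_ite_eq']
    have h2 : ∑ i, (M i j + M j i) = (∑ i, M i j) + s j := by
      rw [Finset.sum_add_distrib]
    rw [h2] at h1
    linarith
  have hS1 : 2 * S1 = (n:ℤ)^2 - n := by
    have h1 : S1 = ∑ j, ∑ i, M i j := by
      rw [hS1def]; exact Finset.sum_comm
    have h2 : S1 = ∑ j, (((n:ℤ) - 1) - s j) := by
      rw [h1]; exact Finset.sum_congr rfl (fun j _ => hcol j)
    have h3 : ∑ j : Fin n, (((n:ℤ) - 1) - s j) = (n:ℤ) * ((n:ℤ) - 1) - S1 := by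
      rw [Finset.sum_sub_distrib, Finset.sum_const, Finset.card_univ, Fintype.card_fin,
        nsmul_eq_mul, ← hS1def]
    rw [h3] at h2
    linear_combination h2
  -- the two triple sums
  set A : ℤ := ∑ i, ∑ j, ∑ k, M i j * M j k * M k i with hA
  set B : ℤ := ∑ i, ∑ j, ∑ k, M i j * M j k * M i k with hB
  -- N and T as cards
  set N : ℕ := (Finset.univ.filter (fun p : Fin n × Fin n × Fin n =>
      M p.1 p.2.1 = 1 ∧ M p.2.1 p.2.2 = 1 ∧ M p.2.2 p.1 = 1)).card with hN
  set T : ℕ := (Finset.univ.filter (fun p : Fin n × Fin n × Fin n =>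
      M p.1 p.2.1 = 1 ∧ M p.2.1 p.2.2 = 1 ∧ M p.1 p.2.2 = 1)).card with hT
  have hC3 : C3 M = N / 3 := rfl
  have hcast : ∀ (f : Fin n → Fin n → Fin n → ℤ)
      (P : Fin n × Fin n × Fin n → Prop) [DecidablePred P],
      (∀ i j k, (if P (i, j, k) then (1:ℤ) else 0) = f i j k) →
      (((Finset.univ.filter P).card : ℤ) = ∑ i, ∑ j, ∑ k, f i j k) := by
    intro f P _ hpt
    rw [Finset.card_filter]
    push_cast
    rw [Fintype.sum_prod_type]
    refine Finset.sum_congr rfl (fun i _ => ?_)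
    rw [Fintype.sum_prod_type]
    refine Finset.sum_congr rfl (fun j _ => Finset.sum_congr rfl (fun k _ => ?_))
    exact hpt i j k
  have hNA : (N : ℤ) = A := by
    rw [hN, hA]
    refine hcast _ _ (fun i j k => ?_)
    rcases h01 i j with h1 | h1 <;> rcases h01 j k with h2 | h2 <;>
      rcases h01 k i with h3 | h3 <;> simp [h1, h2, h3]
  have hTB : (T : ℤ) = B := by
    rw [hT, hB]
    refine hcast _ _ (fun i j k => ?_)
    rcases h01 i j with h1 | h1 <;> rcases h01 j k with h2 | h2 <;>
      rcases h01 i k with h3 | h3 <;> simp [h1, h2, h3]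
  -- A + B = paths
  have hsplit : ∀ i j k, M i j * M j k = M i j * M j k * M k i + M i j * M j k * M i k := by
    intro i j k
    by_cases h : i = k
    · subst h
      rw [hprod0 i j, hdiag i]
      ring
    · have h1 : M k i + M i k = 1 := hpair k i (fun hh => h hh.symm)
      linear_combination (-(M i j * M j k)) * h1
  have hABP : A + B = ((n:ℤ) - 1) * S1 - S2 := by
    have e1 : A + B = ∑ i, ∑ j, ∑ k, M i j * M j k := by
      rw [hA, hB, ← Finset.sum_add_distrib]
      refine Finset.sum_congr rfl (fun i _ => ?_)
      rw [← Finset.sum_add_distrib]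
      refine Finset.sum_congr rfl (fun j _ => ?_)
      rw [← Finset.sum_add_distrib]
      exact Finset.sum_congr rfl (fun k _ => (hsplit i j k).symm)
    have e2 : ∑ i, ∑ j, ∑ k, M i j * M j k = ∑ j, (((n:ℤ) - 1) - s j) * s j := by
      rw [Finset.sum_comm]
      refine Finset.sum_congr rfl (fun j _ => ?_)
      rw [← hcol j, Finset.sum_mul_sum]
    have e3 : ∑ j, (((n:ℤ) - 1) - s j) * s j = ((n:ℤ) - 1) * S1 - S2 := by
      rw [hS1def, hS2def, Finset.mul_sum, ← Finset.sum_sub_distrib]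
      exact Finset.sum_congr rfl (fun j _ => by ring)
    rw [e1, e2, e3]
  -- 2B = S2 - S1
  have h2B : 2 * B = S2 - S1 := by
    have hpt : ∀ i j k, M i j * M i k =
        M i j * M j k * M i k + M i j * M k j * M i k + (if j = k then M i j else 0) := by
      intro i j k
      by_cases h : j = k
      · subst h
        rw [if_pos rfl, hdiag j, hsq i j]
        ring
      · rw [if_neg h]
        have h1 : M j k + M k j = 1 := hpair j k h
        linear_combination (-(M i j * M i k)) * h1
    have e1 : S2 = ∑ i, ∑ j, ∑ k, M i j * M i k := by
      rw [hS2def]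
      refine Finset.sum_congr rfl (fun i _ => ?_)
      rw [Finset.sum_mul_sum]
    have e2 : S2 = B + B + S1 := by
      rw [e1]
      have : ∀ i : Fin n, (∑ j, ∑ k, M i j * M i k) =
          (∑ j, ∑ k, M i j * M j k * M i k) + (∑ j, ∑ k, M i j * M j k * M i k) + s i := by
        intro i
        have step1 : (∑ j, ∑ k, M i j * M i k) =
            (∑ j, ∑ k, M i j * M j k * M i k) + (∑ j, ∑ k, M i j * M k j * M i k)
              + (∑ j, ∑ k, (if j = k then M i j else 0)) := by
          rw [← Finset.sum_add_distrib, ← Finset.sum_add_distrib]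
          refine Finset.sum_congr rfl (fun j _ => ?_)
          rw [← Finset.sum_add_distrib, ← Finset.sum_add_distrib]
          exact Finset.sum_congr rfl (fun k _ => hpt i j k)
        have step2 : (∑ j, ∑ k, M i j * M k j * M i k) =
            ∑ j, ∑ k, M i j * M j k * M i k := by
          rw [Finset.sum_comm]
          refine Finset.sum_congr rfl (fun j _ => Finset.sum_congr rfl (fun k _ => by ring))
        have step3 : (∑ j : Fin n, ∑ k : Fin n, (if j = k then M i j else 0)) = s i := by
          refine Finset.sum_congr rfl (fun j _ => ?_) |>.trans rfl
          simp [Finset.sum_ite_eq]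
        rw [step1, step2, step3]
      rw [Finset.sum_congr rfl (fun i _ => this i), Finset.sum_add_distrib,
        Finset.sum_add_distrib, ← hB, ← hS1def]
    linarith
  -- the sum of squares
  set Q : ℤ := ∑ i, (2 * s i - ((n:ℤ) - 1))^2 with hQdef
  have hQ : Q = 4 * S2 - 4 * ((n:ℤ) - 1) * S1 + n * ((n:ℤ) - 1)^2 := by
    have e : ∀ i : Fin n, (2 * s i - ((n:ℤ) - 1))^2 =
        4 * (s i * s i) - (4 * ((n:ℤ) - 1)) * s i + ((n:ℤ) - 1)^2 := by
      intro i; ring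
    rw [hQdef, Finset.sum_congr rfl (fun i _ => e i), Finset.sum_add_distrib,
      Finset.sum_sub_distrib, ← Finset.mul_sum, ← Finset.mul_sum, Finset.sum_const,
      Finset.card_univ, Fintype.card_fin, ← hS2def, ← hS1def]
    ring
  have hkey : 8 * (N:ℤ) + 3 * Q = (n:ℤ)^3 - n := by
    have e1 : (N:ℤ) + T = ((n:ℤ) - 1) * S1 - S2 := by rw [hNA, hTB]; exact hABP
    have e2 : 2 * (T:ℤ) = S2 - S1 := by rw [hTB]; exact h2B
    linear_combination 8 * e1 - 4 * e2 + (4 - 2*(n:ℤ)) * hS1 + 3 * hQ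
  constructor
  · -- odd case
    intro hodd
    obtain ⟨m, hm⟩ := hodd
    have hQ0 : 0 ≤ Q := Finset.sum_nonneg (fun i _ => sq_nonneg _)
    have h8 : 8 * N + n ≤ n^3 := by
      have : 8 * (N:ℤ) + n ≤ (n:ℤ)^3 := by linarith
      exact_mod_cast this
    have h6 : 6 * (n + 1).choose 3 = (2*m+2) * (2*m+1) * (2*m) := by
      rw [hm, show 2*m+1+1 = 2*m+2 by omega]
      exact choose3aux (2*m)
    rw [hC3]
    exact arith_odd N _ n m hm h8 h6
  · -- even case
    intro heven
    obtain ⟨m, hm⟩ := heven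
    have hm' : n = 2 * m := by omega
    have hQn : (n:ℤ) ≤ Q := by
      have h1 : ∀ i : Fin n, (1:ℤ) ≤ (2 * s i - ((n:ℤ) - 1))^2 := by
        intro i
        have hx : 2 * s i - ((n:ℤ) - 1) ≠ 0 := by
          rw [hm']
          push_cast
          omega
        have : 2 * s i - ((n:ℤ) - 1) ≤ -1 ∨ 1 ≤ 2 * s i - ((n:ℤ) - 1) := by omega
        rcases this with h | h <;> nlinarith
      calc (n:ℤ) = ∑ _i : Fin n, (1:ℤ) := by simp
        _ ≤ Q := Finset.sum_le_sum (fun i _ => h1 i)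
    have h8 : 8 * N + 4 * n ≤ n^3 := by
      have : 8 * (N:ℤ) + 4 * n ≤ (n:ℤ)^3 := by linarith
      exact_mod_cast this
    rw [hC3, show n / 2 = m by omega]
    rcases Nat.eq_zero_or_pos m with hm0 | hm0
    · subst hm0
      rw [hm'] at h8
      norm_num at h8
      have hN0 : N = 0 := by omega
      rw [hN0]
      simp
    · obtain ⟨k, hk⟩ : ∃ k, m = k + 1 := ⟨m - 1, by omega⟩
      have h6 : 6 * (m + 1).choose 3 = (k+2) * (k+1) * k := by
        rw [hk, show k+1+1 = k+2 by omega]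
        exact choose3aux k
      exact arith_even N _ n k (by omega) h8 h6
end

section
/- A tournament matrix M of order n satisfies equality in Moon's bound (C_3(M) = (1/4)·C(n+1,3) for n odd, C_3(M) = 2·C(n/2+1,3) for n even) if and only if M is regular or almost regular. -/
open scoped Classical

section AuxStmt3

variable {n : ℕ} {M : Matrix (Fin n) (Fin n) ℤ}

lemma hb (hM : IsTournament M) (i j : Fin n) :
    M i j + M j i = if i = j then 0 else 1 := by
  have := congrFun (congrFun hM.2 i) j
  simpa [Matrix.add_apply, Matrix.transpose_apply] using this

lemma hdiag (hM : IsTournament M) (i : Fin n) : M i i = 0 := by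
  have := hb hM i i; simp at this; omega

lemma hsq (hM : IsTournament M) (i j : Fin n) : M i j * M i j = M i j := by
  rcases hM.1 i j with h | h <;> rw [h] <;> ring

lemma ite_row (i : Fin n) : ∑ j : Fin n, (if i = j then (0:ℤ) else 1) = (n : ℤ) - 1 := by
  have h : ∀ j : Fin n, (if i = j then (0:ℤ) else 1) = 1 - (if i = j then 1 else 0) := by
    intro j; split <;> ring
  rw [Finset.sum_congr rfl (fun j _ => h j), Finset.sum_sub_distrib,
    Finset.sum_ite_eq Finset.univ i (fun _ => (1:ℤ))]
  simp

lemma sum2 (hM : IsTournament M) :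
    2 * ∑ i, ∑ j, M i j = (n : ℤ) * ((n : ℤ) - 1) := by
  have h1 : ∑ i : Fin n, ∑ j : Fin n, M i j = ∑ i : Fin n, ∑ j : Fin n, M j i :=
    Finset.sum_comm
  calc 2 * ∑ i, ∑ j, M i j
      = ∑ i : Fin n, ∑ j : Fin n, (M i j + M j i) := by
        rw [two_mul]; nth_rewrite 2 [h1]; rw [← Finset.sum_add_distrib]
        exact Finset.sum_congr rfl fun i _ => (Finset.sum_add_distrib).symm
    _ = ∑ i : Fin n, ((n:ℤ) - 1) := by
        refine Finset.sum_congr rfl fun i _ => ?_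
        rw [Finset.sum_congr rfl fun j _ => hb hM i j, ite_row]
    _ = (n : ℤ) * ((n:ℤ) - 1) := by simp [mul_comm]; ring

lemma pointwise (hM : IsTournament M) (i j k : Fin n) :
    M i j * M j k * M k i + M i k * M k j * M j i
      + M i j * M i k + M j i * M j k + M k i * M k j
    = (M i j + M j i) * ((M j k + M k j) * (M k i + M i k))
      + (1 - (M i j + M j i)) * M k i + (1 - (M j k + M k j)) * M i j
      + (1 - (M k i + M i k)) * M j i := by
  by_cases hij : i = j
  · subst hij
    rw [hdiag hM i, hsq hM k i]; ring
  · by_cases hjk : j = k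
    · subst hjk
      have hbij := hb hM i j; rw [if_neg hij] at hbij
      have h2 : M j i = 1 - M i j := by linarith
      rw [hdiag hM j, hsq hM i j, h2]; ring
    · by_cases hik : i = k
      · subst hik
        have hbij := hb hM i j; rw [if_neg hij] at hbij
        have h2 : M j i = 1 - M i j := by linarith
        rw [hdiag hM i, hsq hM j i, h2]; ring
      · have h1 := hb hM i j; rw [if_neg hij] at h1
        have h2 := hb hM j k; rw [if_neg hjk] at h2
        have h3 := hb hM k i; rw [if_neg (fun h => hik h.symm)] at h3
        have e1 : M j i = 1 - M i j := by linarith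
        have e2 : M k j = 1 - M j k := by linarith
        have e3 : M i k = 1 - M k i := by linarith
        rw [e1, e2, e3]; ring

lemma cyc_rev :
    (∑ i : Fin n, ∑ j : Fin n, ∑ k : Fin n, M i k * M k j * M j i)
      = ∑ i : Fin n, ∑ j : Fin n, ∑ k : Fin n, M i j * M j k * M k i :=
  Finset.sum_congr rfl fun i _ => Finset.sum_comm

lemma dom1 :
    (∑ i : Fin n, ∑ j : Fin n, ∑ k : Fin n, M i j * M i k)
      = ∑ i : Fin n, (∑ j : Fin n, M i j) ^ 2 := by
  refine Finset.sum_congr rfl fun i _ => ?_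
  rw [sq, Finset.sum_mul_sum]

lemma dom2 :
    (∑ i : Fin n, ∑ j : Fin n, ∑ k : Fin n, M j i * M j k)
      = ∑ i : Fin n, (∑ j : Fin n, M i j) ^ 2 := by
  rw [Finset.sum_comm]
  refine Finset.sum_congr rfl fun j _ => ?_
  rw [sq, Finset.sum_mul_sum]

lemma dom3 :
    (∑ i : Fin n, ∑ j : Fin n, ∑ k : Fin n, M k i * M k j)
      = ∑ i : Fin n, (∑ j : Fin n, M i j) ^ 2 := by
  have h1 : (∑ i : Fin n, ∑ j : Fin n, ∑ k : Fin n, M k i * M k j)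
      = ∑ i : Fin n, ∑ k : Fin n, ∑ j : Fin n, M k i * M k j :=
    Finset.sum_congr rfl fun i _ => Finset.sum_comm
  rw [h1, Finset.sum_comm]
  refine Finset.sum_congr rfl fun k _ => ?_
  rw [sq, Finset.sum_mul_sum]

lemma inner2 {i j : Fin n} (hij : i ≠ j) :
    ∑ k : Fin n, (if j = k then (0:ℤ) else 1) * (if k = i then (0:ℤ) else 1)
      = (n : ℤ) - 2 := by
  have h : ∀ k : Fin n, (if j = k then (0:ℤ) else 1) * (if k = i then (0:ℤ) else 1)
      = 1 - (if j = k then (1:ℤ) else 0) - (if k = i then (1:ℤ) else 0) := by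
    intro k
    split_ifs with h1 h2 <;> first
      | omega
      | (exact absurd (h1.trans h2) (Ne.symm hij))
  rw [Finset.sum_congr rfl fun k _ => h k]
  rw [Finset.sum_sub_distrib, Finset.sum_sub_distrib,
    Finset.sum_ite_eq Finset.univ j (fun _ => (1:ℤ)),
    Finset.sum_ite_eq' Finset.univ i (fun _ => (1:ℤ))]
  simp; ring

lemma triple_b :
    (∑ i : Fin n, ∑ j : Fin n, ∑ k : Fin n,
      (if i = j then (0:ℤ) else 1) * ((if j = k then (0:ℤ) else 1) * (if k = i then (0:ℤ) else 1)))
      = (n:ℤ) * ((n:ℤ) - 1) * ((n:ℤ) - 2) := by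
  have h : ∀ i j : Fin n, (∑ k : Fin n,
      (if i = j then (0:ℤ) else 1) * ((if j = k then (0:ℤ) else 1) * (if k = i then (0:ℤ) else 1)))
      = (if i = j then (0:ℤ) else 1) * ((n:ℤ) - 2) := by
    intro i j
    rw [← Finset.mul_sum]
    by_cases hij : i = j
    · simp [hij]
    · rw [if_neg hij, inner2 hij]
  have h2 : ∀ i : Fin n, (∑ j : Fin n, (if i = j then (0:ℤ) else 1) * ((n:ℤ) - 2))
      = ((n:ℤ) - 1) * ((n:ℤ) - 2) := by
    intro i
    rw [← Finset.sum_mul, ite_row]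
  calc (∑ i : Fin n, ∑ j : Fin n, ∑ k : Fin n,
      (if i = j then (0:ℤ) else 1) * ((if j = k then (0:ℤ) else 1) * (if k = i then (0:ℤ) else 1)))
      = ∑ i : Fin n, ∑ j : Fin n, (if i = j then (0:ℤ) else 1) * ((n:ℤ) - 2) :=
        Finset.sum_congr rfl fun i _ => Finset.sum_congr rfl fun j _ => h i j
    _ = ∑ i : Fin n, ((n:ℤ) - 1) * ((n:ℤ) - 2) := Finset.sum_congr rfl fun i _ => h2 i
    _ = (n:ℤ) * (((n:ℤ) - 1) * ((n:ℤ) - 2)) := by simp [mul_comm]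
    _ = (n:ℤ) * ((n:ℤ) - 1) * ((n:ℤ) - 2) := by ring

lemma corr1 (hM : IsTournament M) :
    (∑ i : Fin n, ∑ j : Fin n, ∑ k : Fin n, (1 - (M i j + M j i)) * M k i)
      = ∑ i : Fin n, ∑ j : Fin n, M i j := by
  have hc : ∀ i j : Fin n, 1 - (M i j + M j i) = if i = j then (1:ℤ) else 0 := by
    intro i j; rw [hb hM i j]; split <;> ring
  have h : ∀ i : Fin n, (∑ j : Fin n, ∑ k : Fin n, (1 - (M i j + M j i)) * M k i)
      = ∑ k : Fin n, M k i := by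
    intro i
    have : ∀ j : Fin n, (∑ k : Fin n, (1 - (M i j + M j i)) * M k i)
        = if i = j then (∑ k : Fin n, M k i) else 0 := by
      intro j
      rw [← Finset.mul_sum, hc i j]
      split <;> ring
    rw [Finset.sum_congr rfl fun j _ => this j,
      Finset.sum_ite_eq Finset.univ i (fun _ => ∑ k : Fin n, M k i)]
    simp
  rw [Finset.sum_congr rfl fun i _ => h i]
  exact Finset.sum_comm

lemma corr2 (hM : IsTournament M) :
    (∑ i : Fin n, ∑ j : Fin n, ∑ k : Fin n, (1 - (M j k + M k j)) * M i j)
      = ∑ i : Fin n, ∑ j : Fin n, M i j := by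
  have hc : ∀ j k : Fin n, 1 - (M j k + M k j) = if j = k then (1:ℤ) else 0 := by
    intro j k; rw [hb hM j k]; split <;> ring
  refine Finset.sum_congr rfl fun i _ => Finset.sum_congr rfl fun j _ => ?_
  have : ∀ k : Fin n, (1 - (M j k + M k j)) * M i j
      = if j = k then M i j else 0 := by
    intro k; rw [hc j k]; split <;> ring
  rw [Finset.sum_congr rfl fun k _ => this k,
    Finset.sum_ite_eq Finset.univ j (fun _ => M i j)]
  simp

lemma corr3 (hM : IsTournament M) :
    (∑ i : Fin n, ∑ j : Fin n, ∑ k : Fin n, (1 - (M k i + M i k)) * M j i)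
      = ∑ i : Fin n, ∑ j : Fin n, M i j := by
  have hc : ∀ k i : Fin n, 1 - (M k i + M i k) = if k = i then (1:ℤ) else 0 := by
    intro k i; rw [hb hM k i]; split <;> ring
  have h : ∀ i j : Fin n, (∑ k : Fin n, (1 - (M k i + M i k)) * M j i) = M j i := by
    intro i j
    have : ∀ k : Fin n, (1 - (M k i + M i k)) * M j i
        = if k = i then M j i else 0 := by
      intro k; rw [hc k i]; split <;> ring
    rw [Finset.sum_congr rfl fun k _ => this k,
      Finset.sum_ite_eq' Finset.univ i (fun _ => M j i)]
    simp
  rw [Finset.sum_congr rfl fun i _ => Finset.sum_congr rfl fun j _ => h i j]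
  exact Finset.sum_comm

lemma master (hM : IsTournament M) :
    2 * (∑ i : Fin n, ∑ j : Fin n, ∑ k : Fin n, M i j * M j k * M k i)
      + 3 * (∑ i : Fin n, (∑ j : Fin n, M i j) ^ 2)
    = (n:ℤ) * ((n:ℤ)-1) * ((n:ℤ)-2) + 3 * (∑ i : Fin n, ∑ j : Fin n, M i j) := by
  have HS := Finset.sum_congr rfl fun i (_ : i ∈ (Finset.univ : Finset (Fin n))) =>
    Finset.sum_congr rfl fun j (_ : j ∈ (Finset.univ : Finset (Fin n))) =>
      Finset.sum_congr rfl fun k (_ : k ∈ (Finset.univ : Finset (Fin n))) =>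
        pointwise hM i j k
  simp only [Finset.sum_add_distrib] at HS
  rw [cyc_rev, dom1, dom2, dom3, corr1 hM, corr2 hM, corr3 hM] at HS
  have hbterm : (∑ i : Fin n, ∑ j : Fin n, ∑ k : Fin n,
      (M i j + M j i) * ((M j k + M k j) * (M k i + M i k)))
      = (n:ℤ) * ((n:ℤ)-1) * ((n:ℤ)-2) := by
    rw [Finset.sum_congr rfl fun i (_ : i ∈ (Finset.univ : Finset (Fin n))) =>
      Finset.sum_congr rfl fun j (_ : j ∈ (Finset.univ : Finset (Fin n))) =>
        Finset.sum_congr rfl fun k (_ : k ∈ (Finset.univ : Finset (Fin n))) => by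
          rw [hb hM i j, hb hM j k, hb hM k i]]
    exact triple_b
  rw [hbterm] at HS
  linarith

lemma card_eq (hM : IsTournament M) :
    (((Finset.univ.filter (fun p : Fin n × Fin n × Fin n =>
      M p.1 p.2.1 = 1 ∧ M p.2.1 p.2.2 = 1 ∧ M p.2.2 p.1 = 1)).card : ℤ))
    = ∑ i : Fin n, ∑ j : Fin n, ∑ k : Fin n, M i j * M j k * M k i := by
  rw [Finset.card_filter]
  push_cast
  rw [Fintype.sum_prod_type]
  refine Finset.sum_congr rfl fun i _ => ?_
  rw [Fintype.sum_prod_type]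
  refine Finset.sum_congr rfl fun j _ => Finset.sum_congr rfl fun k _ => ?_
  rcases hM.1 i j with h1 | h1 <;> rcases hM.1 j k with h2 | h2 <;>
    rcases hM.1 k i with h3 | h3 <;> simp [h1, h2, h3]

lemma six_choose (k : ℕ) : 6 * (k + 1).choose 3 + k = k ^ 3 := by
  have two_ch : ∀ j : ℕ, 2 * (j + 1).choose 2 = j * (j + 1) := by
    intro j
    induction j with
    | zero => decide
    | succ i ih =>
      have : (i + 1 + 1).choose 2 = (i + 1).choose 1 + (i + 1).choose 2 :=
        Nat.choose_succ_succ (i + 1) 1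
      rw [this, Nat.choose_one_right, Nat.mul_add, ih]
      ring
  induction k with
  | zero => decide
  | succ i ih =>
    have h1 : (i + 1 + 1).choose 3 = (i + 1).choose 2 + (i + 1).choose 3 :=
      Nat.choose_succ_succ (i + 1) 2
    have h2 := two_ch i
    have h3 : (i + 1) ^ 3 = 3 * (i * (i + 1)) + i ^ 3 + 1 := by ring
    omega

lemma score_cast (hM : IsTournament M) (i : Fin n) :
    ((score M i : ℤ)) = ∑ j, M i j := by
  simp only [score]
  rw [Int.toNat_of_nonneg]
  exact Finset.sum_nonneg fun j _ => by rcases hM.1 i j with h | h <;> omega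

lemma three_dvd_consec (m : ℤ) : (3:ℤ) ∣ m * (m - 1) * (m - 2) := by
  obtain ⟨k, hk⟩ : ∃ k : ℤ, m = 3 * k + m % 3 := ⟨m / 3, by omega⟩
  have hr : m % 3 = 0 ∨ m % 3 = 1 ∨ m % 3 = 2 := by omega
  rcases hr with h | h | h <;> rw [hk, h]
  · exact ⟨k * (3 * k + 0 - 1) * (3 * k + 0 - 2), by ring⟩
  · exact ⟨(3 * k + 1) * k * (3 * k + 1 - 2), by ring⟩
  · exact ⟨(3 * k + 2) * (3 * k + 2 - 1) * k, by ring⟩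

lemma T_dvd3 (hM : IsTournament M) :
    (3:ℤ) ∣ (∑ i : Fin n, ∑ j : Fin n, ∑ k : Fin n, M i j * M j k * M k i) := by
  have h := master hM
  obtain ⟨k, hk⟩ := three_dvd_consec ((n:ℤ))
  omega

lemma sum_t_expand (C : ℤ) :
    (∑ i : Fin n, (2 * (∑ j : Fin n, M i j) - C) ^ 2)
      = 4 * (∑ i : Fin n, (∑ j : Fin n, M i j) ^ 2)
        - 4 * C * (∑ i : Fin n, ∑ j : Fin n, M i j) + (n : ℤ) * C ^ 2 := by
  have h : ∀ i : Fin n, (2 * (∑ j : Fin n, M i j) - C) ^ 2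
      = 4 * ((∑ j : Fin n, M i j) ^ 2) - (4 * C) * (∑ j : Fin n, M i j) + C ^ 2 :=
    fun i => by ring
  rw [Finset.sum_congr rfl fun i _ => h i, Finset.sum_add_distrib, Finset.sum_sub_distrib,
    ← Finset.mul_sum, ← Finset.mul_sum, Finset.sum_const, Finset.card_univ, Fintype.card_fin,
    nsmul_eq_mul]

lemma sum_d_expand (C : ℤ) :
    (∑ i : Fin n, ((∑ j : Fin n, M i j) - C) ^ 2)
      = (∑ i : Fin n, (∑ j : Fin n, M i j) ^ 2)
        - 2 * C * (∑ i : Fin n, ∑ j : Fin n, M i j) + (n : ℤ) * C ^ 2 := by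
  have h : ∀ i : Fin n, ((∑ j : Fin n, M i j) - C) ^ 2
      = ((∑ j : Fin n, M i j) ^ 2) - (2 * C) * (∑ j : Fin n, M i j) + C ^ 2 :=
    fun i => by ring
  rw [Finset.sum_congr rfl fun i _ => h i, Finset.sum_add_distrib, Finset.sum_sub_distrib,
    ← Finset.mul_sum, Finset.sum_const, Finset.card_univ, Fintype.card_fin, nsmul_eq_mul]

end AuxStmt3

set_option maxHeartbeats 1000000 in
theorem stmt3 (n : ℕ) (M : Matrix (Fin n) (Fin n) ℤ) (hM : IsTournament M) :
    (Odd n → (4 * C3 M = (n + 1).choose 3 ↔ TRegular M ∨ TAlmostRegular M)) ∧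
    (Even n → (C3 M = 2 * (n / 2 + 1).choose 3 ↔ TRegular M ∨ TAlmostRegular M)) := by
  have hsc : ∀ i, ((score M i : ℤ)) = ∑ j, M i j := score_cast hM
  have hs0 : ∀ i, (0:ℤ) ≤ ∑ j, M i j := fun i =>
    Finset.sum_nonneg fun j _ => by rcases hM.1 i j with h | h <;> omega
  have hcard := card_eq hM
  have hmaster := master hM
  have hsum2 := sum2 hM
  set c := (Finset.univ.filter (fun p : Fin n × Fin n × Fin n =>
    M p.1 p.2.1 = 1 ∧ M p.2.1 p.2.2 = 1 ∧ M p.2.2 p.1 = 1)).card with hcdef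
  set T := ∑ i : Fin n, ∑ j : Fin n, ∑ k : Fin n, M i j * M j k * M k i with hTdef
  set Q := ∑ i : Fin n, (∑ j : Fin n, M i j) ^ 2 with hQdef
  set Sg := ∑ i : Fin n, ∑ j : Fin n, M i j with hSgdef
  have hdvd3 : 3 ∣ c := by
    have h3T := T_dvd3 hM
    rw [← hTdef, ← hcard] at h3T
    exact_mod_cast h3T
  have h33 : 3 * C3 M = c := by
    have hC3 : C3 M = c / 3 := rfl
    rw [hC3]
    exact Nat.mul_div_cancel' hdvd3
  have master2 : 4 * T + 6 * Q
      = 2 * ((n:ℤ) * ((n:ℤ)-1) * ((n:ℤ)-2)) + 3 * ((n:ℤ) * ((n:ℤ)-1)) := by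
    linarith [hmaster, hsum2]
  -- almost-regularity of scores in ℤ form
  have hARz : (TRegular M ∨ TAlmostRegular M) →
      ∀ i j, (∑ k, M i k) ≤ (∑ k, M j k) + 1 := by
    intro h i j
    have h' : score M i ≤ score M j + 1 := by
      rcases h with hr | ha
      · have := hr i j; omega
      · exact ha i j
    have h'' : ((score M i : ℕ) : ℤ) ≤ ((score M j : ℕ) : ℤ) + 1 := by exact_mod_cast h'
    rw [hsc i, hsc j] at h''
    exact h''
  constructor
  · -- odd case
    intro hodd
    obtain ⟨m, hm0⟩ := hodd
    have hm : n = 2 * m + 1 := by omega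
    have hmZ : (n:ℤ) = 2 * (m:ℤ) + 1 := by exact_mod_cast hm
    have hdev := sum_d_expand (M := M) ((m:ℤ))
    rw [← hQdef, ← hSgdef] at hdev
    set D := ∑ i : Fin n, ((∑ j : Fin n, M i j) - (m:ℤ)) ^ 2 with hDdef
    have hSgv : Sg = (2 * (m:ℤ) + 1) * m := by
      rw [hmZ] at hsum2
      have h3 : 2 * Sg = 2 * ((2 * (m:ℤ) + 1) * m) := by linear_combination hsum2
      linarith
    have key : 8 * T + 12 * D = 8 * (m:ℤ)^3 + 12 * (m:ℤ)^2 + 4 * m := by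
      rw [hmZ] at master2 hdev
      linear_combination 2 * master2 + 12 * hdev - 24 * (m:ℤ) * hSgv
    have hchZ : 6 * (((n+1).choose 3 : ℕ) : ℤ) = (n:ℤ)^3 - n := by
      have h6 := six_choose n
      have : ((6 * (n+1).choose 3 + n : ℕ) : ℤ) = ((n^3 : ℕ) : ℤ) := by exact_mod_cast h6
      push_cast at this
      linarith
    have step1 : (4 * C3 M = (n + 1).choose 3) ↔ (8 * c = 6 * (n+1).choose 3) := by omega
    have step2 : (8 * c = 6 * (n+1).choose 3) ↔ (8 * T = (n:ℤ)^3 - n) := by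
      rw [← Nat.cast_inj (R := ℤ)]
      push_cast
      rw [hcard, hchZ]
    have step3 : (8 * T = (n:ℤ)^3 - n) ↔ D = 0 := by
      rw [hmZ]
      have hexp3 : (2*(m:ℤ)+1)^3 - (2*(m:ℤ)+1) = 8*(m:ℤ)^3 + 12*(m:ℤ)^2 + 4*m := by ring
      constructor <;> intro h <;> linarith
    have step4 : D = 0 ↔ ∀ i, (∑ j, M i j) = (m:ℤ) := by
      rw [hDdef]
      constructor
      · intro h i
        have h0 := (Finset.sum_eq_zero_iff_of_nonneg
          (fun i _ => sq_nonneg ((∑ j, M i j) - (m:ℤ)))).mp h i (Finset.mem_univ i)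
        have := sq_eq_zero_iff.mp h0
        linarith
      · intro h
        apply Finset.sum_eq_zero
        intro i _
        rw [h i]; ring
    have step5 : (∀ i, (∑ j, M i j) = (m:ℤ)) ↔ (TRegular M ∨ TAlmostRegular M) := by
      constructor
      · intro h
        left
        intro i j
        have hi := hsc i; have hj := hsc j
        rw [h i] at hi; rw [h j] at hj
        have : ((score M i : ℕ) : ℤ) = ((score M j : ℕ) : ℤ) := by rw [hi, hj]
        exact_mod_cast this
      · intro h
        have hAR := hARz h
        intro i
        by_contra hne
        have hcases : (∑ j, M i j) ≤ (m:ℤ) - 1 ∨ (m:ℤ) + 1 ≤ ∑ j, M i j := by omega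
        rcases hcases with hlt | hgt
        · have hub : ∀ j : Fin n, (∑ k, M j k) ≤ (m:ℤ) := fun j => by
            have := hAR j i; omega
          have hslt := Finset.sum_lt_sum (fun j (_ : j ∈ Finset.univ) => hub j)
            ⟨i, Finset.mem_univ i, by omega⟩
          rw [Finset.sum_const, Finset.card_univ, Fintype.card_fin, nsmul_eq_mul] at hslt
          rw [← hSgdef, hSgv, hmZ] at hslt
          nlinarith [hslt]
        · have hlb : ∀ j : Fin n, (m:ℤ) ≤ (∑ k, M j k) := fun j => by
            have := hAR i j; omega
          have hslt := Finset.sum_lt_sum (fun j (_ : j ∈ Finset.univ) => hlb j)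
            ⟨i, Finset.mem_univ i, by omega⟩
          rw [Finset.sum_const, Finset.card_univ, Fintype.card_fin, nsmul_eq_mul] at hslt
          rw [← hSgdef, hSgv, hmZ] at hslt
          nlinarith [hslt]
    exact step1.trans (step2.trans (step3.trans (step4.trans step5)))
  · -- even case
    intro heven
    obtain ⟨m, hm0⟩ := heven
    have hm : n = 2 * m := by omega
    have hm2 : n / 2 = m := by omega
    have hmZ : (n:ℤ) = 2 * (m:ℤ) := by exact_mod_cast hm
    have hE := sum_t_expand (M := M) (2 * (m:ℤ) - 1)
    rw [← hQdef, ← hSgdef] at hE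
    set E := ∑ i : Fin n, (2 * (∑ j : Fin n, M i j) - (2 * (m:ℤ) - 1)) ^ 2 with hEdef
    have hSgv : Sg = (m:ℤ) * (2 * (m:ℤ) - 1) := by
      rw [hmZ] at hsum2
      have h3 : 2 * Sg = 2 * ((m:ℤ) * (2 * (m:ℤ) - 1)) := by linear_combination hsum2
      linarith
    have key : 8 * T + 3 * E = 8 * (m:ℤ)^3 - 2 * m := by
      rw [hmZ] at master2 hE
      linear_combination 2 * master2 + 3 * hE - 12 * (2 * (m:ℤ) - 1) * hSgv
    have hchZ : 6 * (((m+1).choose 3 : ℕ) : ℤ) = (m:ℤ)^3 - m := by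
      have h6 := six_choose m
      have : ((6 * (m+1).choose 3 + m : ℕ) : ℤ) = ((m^3 : ℕ) : ℤ) := by exact_mod_cast h6
      push_cast at this
      linarith
    rw [hm2]
    have step1 : (C3 M = 2 * (m + 1).choose 3) ↔ (c = 6 * (m+1).choose 3) := by omega
    have step2 : (c = 6 * (m+1).choose 3) ↔ (T = (m:ℤ)^3 - m) := by
      rw [← Nat.cast_inj (R := ℤ)]
      push_cast
      rw [hcard, hchZ]
    have step3 : (T = (m:ℤ)^3 - m) ↔ E = 2 * m := by
      constructor <;> intro h <;> linarith
    have hodd_t : ∀ i, 1 ≤ (2 * (∑ j, M i j) - (2 * (m:ℤ) - 1)) ^ 2 := by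
      intro i
      have hne : 2 * (∑ j, M i j) - (2 * (m:ℤ) - 1) ≠ 0 := by omega
      nlinarith [Int.one_le_abs hne, sq_abs (2 * (∑ j, M i j) - (2 * (m:ℤ) - 1)),
        abs_nonneg (2 * (∑ j, M i j) - (2 * (m:ℤ) - 1))]
    have step4 : E = 2 * (m:ℤ) ↔
        ∀ i, (∑ j, M i j) = (m:ℤ) ∨ (∑ j, M i j) = (m:ℤ) - 1 := by
      have hsplit : ∑ i : Fin n, ((2 * (∑ j, M i j) - (2 * (m:ℤ) - 1)) ^ 2 - 1)
          = E - (n:ℤ) := by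
        rw [Finset.sum_sub_distrib, Finset.sum_const, Finset.card_univ, Fintype.card_fin,
          nsmul_eq_mul, hEdef]
        ring
      constructor
      · intro h i
        have hz : ∑ i : Fin n, ((2 * (∑ j, M i j) - (2 * (m:ℤ) - 1)) ^ 2 - 1) = 0 := by
          rw [hsplit, h, hmZ]; ring
        have h0 := (Finset.sum_eq_zero_iff_of_nonneg
          (fun i' _ => by linarith [hodd_t i'])).mp hz i (Finset.mem_univ i)
        have h1 : (2 * (∑ j, M i j) - (2 * (m:ℤ) - 1)) ^ 2 = 1 := by linarith
        have h2 : (2 * (∑ j, M i j) - (2 * (m:ℤ) - 1) - 1)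
            * (2 * (∑ j, M i j) - (2 * (m:ℤ) - 1) + 1) = 0 := by linear_combination h1
        rcases mul_eq_zero.mp h2 with h3 | h3 <;> omega
      · intro h
        have : ∀ i : Fin n, (2 * (∑ j, M i j) - (2 * (m:ℤ) - 1)) ^ 2 = 1 := by
          intro i
          rcases h i with h3 | h3 <;>
            · have ht : 2 * (∑ j, M i j) - (2 * (m:ℤ) - 1) = 1 ∨
                  2 * (∑ j, M i j) - (2 * (m:ℤ) - 1) = -1 := by omega
              rcases ht with ht | ht <;> rw [ht] <;> ring
        rw [hEdef, Finset.sum_congr rfl fun i _ => this i, Finset.sum_const,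
          Finset.card_univ, Fintype.card_fin, nsmul_eq_mul, hm]
        push_cast
        ring
    have step5 : (∀ i, (∑ j, M i j) = (m:ℤ) ∨ (∑ j, M i j) = (m:ℤ) - 1)
        ↔ (TRegular M ∨ TAlmostRegular M) := by
      constructor
      · intro h
        right
        intro i j
        have hi := hsc i; have hj := hsc j
        have h'' : ((score M i : ℕ) : ℤ) ≤ ((score M j : ℕ) : ℤ) + 1 := by
          rw [hi, hj]
          rcases h i with h1 | h1 <;> rcases h j with h2 | h2 <;> omega
        exact_mod_cast h''
      · intro h
        have hAR := hARz h
        intro i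
        by_contra hne
        push_neg at hne
        have hcases : (∑ j, M i j) ≤ (m:ℤ) - 2 ∨ (m:ℤ) + 1 ≤ ∑ j, M i j := by omega
        have hm0' : (0:ℤ) ≤ (m:ℤ) := by positivity
        rcases hcases with hlt | hgt
        · have hub : ∀ j : Fin n, (∑ k, M j k) ≤ (m:ℤ) - 1 := fun j => by
            have := hAR j i; omega
          have hsle := Finset.sum_le_sum (fun j (_ : j ∈ Finset.univ) => hub j)
          rw [Finset.sum_const, Finset.card_univ, Fintype.card_fin, nsmul_eq_mul] at hsle
          rw [← hSgdef, hSgv, hmZ] at hsle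
          have hmle : (m:ℤ) ≤ 0 := by nlinarith [hsle]
          have : (m:ℤ) = 0 := le_antisymm hmle hm0'
          rw [this] at hlt
          linarith [hs0 i]
        · have hlb : ∀ j : Fin n, (m:ℤ) ≤ (∑ k, M j k) := fun j => by
            have := hAR i j; omega
          have hslt := Finset.sum_lt_sum (fun j (_ : j ∈ Finset.univ) => hlb j)
            ⟨i, Finset.mem_univ i, by omega⟩
          rw [Finset.sum_const, Finset.card_univ, Fintype.card_fin, nsmul_eq_mul] at hslt
          rw [← hSgdef, hSgv, hmZ] at hslt
          nlinarith [hslt]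
    exact step1.trans (step2.trans (step3.trans (step4.trans step5)))
end

section
/- If n is odd, then the maximum number of 3-cycles among singular tournament matrices of order n satisfies 2·C((n+1)/2, 3) ≤ max ≤ (1/4)·C(n,3). -/
open scoped Classical

/-! ### Auxiliary lemmas -/

lemma tour_pair {ι : Type} [Fintype ι] [DecidableEq ι] {M : Matrix ι ι ℤ}
    (hT : IsTournament M) (i j : ι) : M i j + M j i = if i = j then 0 else 1 := by
  have := congrFun (congrFun hT.2 i) j
  simpa [Matrix.add_apply, Matrix.transpose_apply] using this

lemma tour_diag {ι : Type} [Fintype ι] [DecidableEq ι] {M : Matrix ι ι ℤ}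
    (hT : IsTournament M) (i : ι) : M i i = 0 := by
  have := tour_pair hT i i; simp at this; linarith

lemma tour_mul0 {ι : Type} [Fintype ι] [DecidableEq ι] {M : Matrix ι ι ℤ}
    (hT : IsTournament M) (i j : ι) : M i j * M j i = 0 := by
  by_cases h : i = j
  · subst h; simp [tour_diag hT i]
  · have h2 := tour_pair hT i j
    rcases hT.1 i j with h3 | h3 <;> rcases hT.1 j i with h4 | h4 <;>
      simp [h3, h4, h] at h2 ⊢

lemma sum_ite_ne {ι : Type} [Fintype ι] [DecidableEq ι] (j : ι) :
    (∑ i : ι, (if i = j then (0:ℤ) else 1)) = (Fintype.card ι : ℤ) - 1 := by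
  have : ∀ i : ι, (if i = j then (0:ℤ) else 1) = 1 - (if i = j then 1 else 0) := by
    intro i; split <;> ring
  rw [Finset.sum_congr rfl fun i _ => this i, Finset.sum_sub_distrib,
    Finset.sum_const, Finset.sum_ite_eq' Finset.univ j fun _ => (1:ℤ)]
  simp

/-- column sums -/
lemma tour_col {ι : Type} [Fintype ι] [DecidableEq ι] {M : Matrix ι ι ℤ}
    (hT : IsTournament M) (j : ι) :
    ∑ i, M i j = (Fintype.card ι : ℤ) - 1 - ∑ i, M j i := by
  have h1 : ∀ i : ι, M i j = (if i = j then (0:ℤ) else 1) - M j i := by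
    intro i; have := tour_pair hT i j; linarith
  rw [Finset.sum_congr rfl fun i _ => h1 i, Finset.sum_sub_distrib, sum_ite_ne j]

/-- sum of scores -/
lemma tour_score_sum {ι : Type} [Fintype ι] [DecidableEq ι] {M : Matrix ι ι ℤ}
    (hT : IsTournament M) :
    2 * ∑ i, ∑ j, M i j = (Fintype.card ι : ℤ) * ((Fintype.card ι : ℤ) - 1) := by
  have h1 : ∑ i, ∑ j, (M i j + M j i) = ∑ i : ι, ((Fintype.card ι : ℤ) - 1) := by
    refine Finset.sum_congr rfl fun i _ => ?_
    rw [Finset.sum_congr rfl fun j _ => tour_pair hT i j]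
    have : ∀ j : ι, (if i = j then (0:ℤ) else 1) = (if j = i then (0:ℤ) else 1) := by
      intro j; by_cases h : i = j <;> simp [h, Ne.symm, eq_comm]
    rw [Finset.sum_congr rfl fun j _ => this j, sum_ite_ne i]
  have h2 : ∑ i, ∑ j, (M i j + M j i) = (∑ i, ∑ j, M i j) + ∑ i, ∑ j, M j i := by
    simp [Finset.sum_add_distrib]
  have h3 : ∑ i, ∑ j, M j i = ∑ i, ∑ j, M i j := Finset.sum_comm
  rw [h2, h3] at h1
  rw [Finset.sum_const] at h1
  simp only [Finset.card_univ, nsmul_eq_mul] at h1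
  linarith

/-- The fundamental counting identity for tournaments:
`2·(#ordered 3-cycles) + 3·∑ sᵢ(sᵢ-1) = n(n-1)(n-2)`. -/
theorem tour_identity {ι : Type} [Fintype ι] [DecidableEq ι]
    (M : Matrix ι ι ℤ) (hT : IsTournament M) :
    2 * ((Finset.univ.filter (fun p : ι × ι × ι =>
        M p.1 p.2.1 = 1 ∧ M p.2.1 p.2.2 = 1 ∧ M p.2.2 p.1 = 1)).card : ℤ)
      + 3 * ∑ i, ((∑ j, M i j) * (∑ j, M i j) - (∑ j, M i j))
      = (Fintype.card ι : ℤ) * ((Fintype.card ι : ℤ) - 1) * ((Fintype.card ι : ℤ) - 2) := by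
  classical
  set n : ℤ := (Fintype.card ι : ℤ) with hn
  have hcard : ((Finset.univ.filter (fun p : ι × ι × ι =>
      M p.1 p.2.1 = 1 ∧ M p.2.1 p.2.2 = 1 ∧ M p.2.2 p.1 = 1)).card : ℤ)
      = ∑ i, ∑ j, ∑ k, M i j * M j k * M k i := by
    rw [Finset.card_filter]
    push_cast
    rw [Fintype.sum_prod_type]
    refine Finset.sum_congr rfl fun i _ => ?_
    rw [Fintype.sum_prod_type]
    refine Finset.sum_congr rfl fun j _ => Finset.sum_congr rfl fun k _ => ?_
    rcases hT.1 i j with h1 | h1 <;> rcases hT.1 j k with h2 | h2 <;>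
      rcases hT.1 k i with h3 | h3 <;> simp [h1, h2, h3]
  set T : ℤ := ∑ i, ∑ j, ∑ k, M i j * M j k * M i k with hTdef
  set s : ι → ℤ := fun i => ∑ j, M i j with hs
  have hL1 : ∑ i, ∑ j, ∑ k, M i j * M j k * M k i
      = (∑ j, (n - 1 - s j) * s j) - T := by
    have step1 : ∀ i j : ι, ∑ k, M i j * M j k * M k i
        = (M i j * s j - M i j * M j i) - ∑ k, M i j * M j k * M i k := by
      intro i j
      have hpt : ∀ k : ι, M i j * M j k * M k i
          = (M i j * M j k - (if k = i then M i j * M j k else 0))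
            - M i j * M j k * M i k := by
        intro k
        by_cases h : k = i
        · subst h; rw [tour_diag hT k]; simp
        · rw [if_neg h]
          have : M k i = 1 - M i k := by
            have := tour_pair hT k i; simp [h] at this; linarith
          rw [this]; ring
      rw [Finset.sum_congr rfl fun k _ => hpt k, Finset.sum_sub_distrib,
        Finset.sum_sub_distrib, Finset.sum_ite_eq' Finset.univ i
          (fun k => M i j * M j k)]
      simp [Finset.mul_sum, hs]
    calc ∑ i, ∑ j, ∑ k, M i j * M j k * M k i
        = ∑ i, ∑ j, ((M i j * s j - M i j * M j i) - ∑ k, M i j * M j k * M i k) := by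
          exact Finset.sum_congr rfl fun i _ => Finset.sum_congr rfl fun j _ => step1 i j
      _ = (∑ i, ∑ j, M i j * s j) - (∑ i, ∑ j, M i j * M j i) - T := by
          simp [Finset.sum_sub_distrib, hTdef]
      _ = (∑ i, ∑ j, M i j * s j) - T := by
          have : ∑ i, ∑ j, M i j * M j i = 0 :=
            Finset.sum_eq_zero fun i _ => Finset.sum_eq_zero fun j _ => tour_mul0 hT i j
          rw [this]; ring
      _ = (∑ j, (n - 1 - s j) * s j) - T := by
          congr 1
          rw [Finset.sum_comm]
          refine Finset.sum_congr rfl fun j _ => ?_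
          rw [← Finset.sum_mul]
          congr 1
          have := tour_col hT j
          rw [this]
  have hL2 : ∑ i, s i * s i = 2 * T + ∑ i, s i := by
    have expand : ∀ i : ι, s i * s i = ∑ j, ∑ k, M i j * M i k := by
      intro i
      rw [hs]
      simp only []
      rw [Finset.sum_mul_sum]
    have hpt : ∀ i j k : ι, M i j * M i k
        = M i j * M j k * M i k + M i j * M i k * M k j + (if j = k then M i j else 0) := by
      intro i j k
      by_cases h : j = k
      · subst h
        have h1 : M j j = 0 := tour_diag hT j
        have h2 : M i j * M i j = M i j := by rcases hT.1 i j with h | h <;> simp [h]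
        simp [h1, h2]
      · have hjk := tour_pair hT j k
        rw [if_neg h]
        simp [h] at hjk
        linear_combination (-(M i j * M i k)) * hjk
    have hsplit : ∑ i, ∑ j, ∑ k, M i j * M i k
        = T + (∑ i, ∑ j, ∑ k, M i j * M i k * M k j) + ∑ i, s i := by
      calc ∑ i, ∑ j, ∑ k, M i j * M i k
          = ∑ i, ∑ j, ∑ k, (M i j * M j k * M i k + M i j * M i k * M k j
              + (if j = k then M i j else 0)) := by
            exact Finset.sum_congr rfl fun i _ => Finset.sum_congr rfl fun j _ =>
              Finset.sum_congr rfl fun k _ => hpt i j k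
        _ = T + (∑ i, ∑ j, ∑ k, M i j * M i k * M k j)
            + ∑ i, ∑ j, ∑ k, (if j = k then M i j else 0) := by
            simp [Finset.sum_add_distrib, hTdef]
        _ = T + (∑ i, ∑ j, ∑ k, M i j * M i k * M k j) + ∑ i, s i := by
            congr 1
            refine Finset.sum_congr rfl fun i _ => ?_
            rw [hs]; simp only []
            refine Finset.sum_congr rfl fun j _ => ?_
            rw [Finset.sum_ite_eq Finset.univ j (fun _ => M i j)]
            simp
    have hswap : ∑ i, ∑ j, ∑ k, M i j * M i k * M k j = T := by
      rw [hTdef]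
      refine Finset.sum_congr rfl fun i _ => ?_
      rw [Finset.sum_comm]
      refine Finset.sum_congr rfl fun j _ => Finset.sum_congr rfl fun k _ => ?_
      ring
    rw [Finset.sum_congr rfl fun i _ => expand i, hsplit, hswap]
    ring
  have hA2 : 2 * ∑ i, s i = n * (n - 1) := tour_score_sum hT
  rw [hcard, hL1]
  have hsub : ∑ i, (s i * s i - s i) = (∑ i, s i * s i) - ∑ i, s i :=
    Finset.sum_sub_distrib _ _
  rw [hsub]
  have hQ : ∑ j, (n - 1 - s j) * s j = (n-1) * (∑ i, s i) - ∑ i, s i * s i := by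
    rw [Finset.sum_congr rfl (fun j (_ : j ∈ Finset.univ) =>
      (by ring : (n - 1 - s j) * s j = (n-1) * s j - s j * s j))]
    rw [Finset.sum_sub_distrib, Finset.mul_sum]
  rw [hQ]
  linear_combination hL2 + (n - 2) * hA2

/-- Shader's inequality step: a singular tournament matrix has large score variance. -/
lemma shader {n : ℕ} (M : Matrix (Fin n) (Fin n) ℤ) (hT : IsTournament M)
    (hdet : M.det = 0) :
    (n:ℤ) * (n:ℤ) * ((n:ℤ) - 1) ≤ 4 * ∑ i, (∑ j, M i j) * (∑ j, M i j) := by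
  classical
  set s : Fin n → ℤ := fun i => ∑ j, M i j with hs
  have hBnn : (0:ℤ) ≤ ∑ i, s i * s i :=
    Finset.sum_nonneg fun i _ => mul_self_nonneg _
  show (n:ℤ) * (n:ℤ) * ((n:ℤ) - 1) ≤ 4 * ∑ i, s i * s i
  rcases Nat.lt_or_ge n 2 with hn2 | hn2
  · interval_cases n <;> simp [Nat.choose] <;> exact mul_self_nonneg _
  obtain ⟨x, hx0, hMx⟩ := Matrix.exists_mulVec_eq_zero_iff.mpr hdet
  have hrow : ∀ i, ∑ j, M i j * x j = 0 := by
    intro i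
    have := congrFun hMx i
    simpa [Matrix.mulVec, dotProduct] using this
  set S : ℤ := ∑ i, x i with hS
  have hcolx : ∀ j, ∑ i, M i j * x i = S - x j := by
    intro j
    have h1 : ∀ i, M i j * x i = x i - (if i = j then x i else 0) - M j i * x i := by
      intro i
      by_cases h : i = j
      · subst h; simp [tour_diag hT i]
      · have hp := tour_pair hT i j
        simp only [if_neg h]
        rw [if_neg h] at hp
        linear_combination x i * hp
    rw [Finset.sum_congr rfl fun i _ => h1 i, Finset.sum_sub_distrib,
      Finset.sum_sub_distrib, Finset.sum_ite_eq' Finset.univ j fun i => x i,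
      hrow j]
    simp [hS]
  have hSS : S * S = ∑ i, x i * x i := by
    have e1 : ∑ j, x j * (S - x j) = S * S - ∑ j, x j * x j := by
      calc ∑ j, x j * (S - x j) = ∑ j, (x j * S - x j * x j) :=
            Finset.sum_congr rfl fun j _ => by ring
        _ = (∑ j, x j) * S - ∑ j, x j * x j := by
            rw [Finset.sum_sub_distrib, Finset.sum_mul]
        _ = S * S - ∑ j, x j * x j := by rw [← hS]
    have e2 : ∑ j, x j * (∑ i, M i j * x i) = 0 := by
      calc ∑ j, x j * (∑ i, M i j * x i) = ∑ j, ∑ i, x j * (M i j * x i) :=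
            Finset.sum_congr rfl fun j _ => Finset.mul_sum _ _ _
        _ = ∑ i, ∑ j, x j * (M i j * x i) := Finset.sum_comm
        _ = ∑ i, (∑ j, M i j * x j) * x i := by
            refine Finset.sum_congr rfl fun i _ => ?_
            rw [Finset.sum_mul]
            exact Finset.sum_congr rfl fun j _ => by ring
        _ = 0 := Finset.sum_eq_zero fun i _ => by rw [hrow i]; ring
    have e3 : ∑ j, x j * (∑ i, M i j * x i) = ∑ j, x j * (S - x j) :=
      Finset.sum_congr rfl fun j _ => by rw [hcolx j]
    rw [e3, e1] at e2
    linarith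
  have hpos : (0:ℤ) < ∑ i, x i * x i := by
    have hxne : ∃ i, x i ≠ 0 := by
      by_contra hc; push_neg at hc; exact hx0 (funext hc)
    obtain ⟨i0, hi0⟩ := hxne
    exact Finset.sum_pos' (fun i _ => mul_self_nonneg _)
      ⟨i0, Finset.mem_univ _, mul_self_pos.mpr hi0⟩
  have hrx : ∑ i, s i * x i = ((n:ℤ) - 1) * S := by
    calc ∑ i, s i * x i = ∑ i, ∑ j, M i j * x i :=
          Finset.sum_congr rfl fun i _ => by
            simpa using Finset.sum_mul Finset.univ (fun j => M i j) (x i)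
      _ = ∑ j, ∑ i, M i j * x i := Finset.sum_comm
      _ = ∑ j : Fin n, (S - x j) := Finset.sum_congr rfl fun j _ => hcolx j
      _ = (n:ℤ) * S - S := by
          rw [Finset.sum_sub_distrib, Finset.sum_const]
          simp [hS, Fintype.card_fin]
      _ = ((n:ℤ) - 1) * S := by ring
  have hsum2 : 2 * ∑ i, s i = (n:ℤ) * ((n:ℤ) - 1) := by
    simpa [Fintype.card_fin] using tour_score_sum hT
  set c : ℤ := (n:ℤ) - 1 with hc
  have hab : ∑ i, (2 * s i - c) * ((n:ℤ) * x i - S) = (n:ℤ) * c * S := by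
    have e : ∀ i, (2 * s i - c) * ((n:ℤ) * x i - S)
        = 2 * (n:ℤ) * (s i * x i) - (2 * S) * s i - (c * (n:ℤ)) * x i + c * S :=
      fun i => by ring
    rw [Finset.sum_congr rfl fun i _ => e i, Finset.sum_add_distrib,
      Finset.sum_sub_distrib, Finset.sum_sub_distrib, ← Finset.mul_sum,
      ← Finset.mul_sum, ← Finset.mul_sum, Finset.sum_const]
    simp only [Finset.card_univ, Fintype.card_fin, nsmul_eq_mul]
    rw [hrx, ← hS]
    linear_combination (-S) * hsum2
  have hbb : ∑ i, ((n:ℤ) * x i - S) ^ 2 = (n:ℤ) * c * (S * S) := by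
    have e : ∀ i, ((n:ℤ) * x i - S) ^ 2
        = (n:ℤ) ^ 2 * (x i * x i) - (2 * (n:ℤ) * S) * x i + S ^ 2 := fun i => by ring
    rw [Finset.sum_congr rfl fun i _ => e i, Finset.sum_add_distrib,
      Finset.sum_sub_distrib, ← Finset.mul_sum, ← Finset.mul_sum, Finset.sum_const]
    simp only [Finset.card_univ, Fintype.card_fin, nsmul_eq_mul]
    rw [← hS]
    linear_combination (-(n:ℤ)^2) * hSS
  have haa : ∑ i, (2 * s i - c) ^ 2 = 4 * (∑ i, s i * s i) - (n:ℤ) * c * c := by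
    have e : ∀ i, (2 * s i - c) ^ 2
        = 4 * (s i * s i) - (4 * c) * s i + c ^ 2 := fun i => by ring
    rw [Finset.sum_congr rfl fun i _ => e i, Finset.sum_add_distrib,
      Finset.sum_sub_distrib, ← Finset.mul_sum, ← Finset.mul_sum, Finset.sum_const]
    simp only [Finset.card_univ, Fintype.card_fin, nsmul_eq_mul]
    linear_combination (-2*c) * hsum2
  have CS := Finset.sum_mul_sq_le_sq_mul_sq Finset.univ
    (fun i => 2 * s i - c) (fun i => (n:ℤ) * x i - S)
  rw [hab, haa, hbb] at CS
  have hn2' : (2:ℤ) ≤ (n:ℤ) := by exact_mod_cast hn2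
  have hposc : (0:ℤ) < (n:ℤ) * c * (S * S) := by
    have h1 : (0:ℤ) < (n:ℤ) * c := mul_pos (by linarith) (by rw [hc]; linarith)
    have h2 : (0:ℤ) < S * S := by rw [hSS]; exact hpos
    exact mul_pos h1 h2
  have h1 : ((n:ℤ) * c) * ((n:ℤ) * c * (S * S))
      ≤ (4 * (∑ i, s i * s i) - (n:ℤ) * c * c) * ((n:ℤ) * c * (S * S)) := by
    calc ((n:ℤ) * c) * ((n:ℤ) * c * (S * S)) = ((n:ℤ) * c * S) ^ 2 := by ring
      _ ≤ _ := CS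
  have h2 := le_of_mul_le_mul_right h1 hposc
  have h3 : (n:ℤ) * c * c + (n:ℤ) * c = (n:ℤ) * (n:ℤ) * c := by
    rw [hc]; ring
  linarith

/-! ### The extremal construction -/

/-- The rotational tournament on `Fin n` (`n = 2k+1`) with vertex `n-1` turned into a sink. -/
def rotM (n k : ℕ) : Matrix (Fin n) (Fin n) ℤ := fun i j =>
  if i = j then 0 else if i.val = n - 1 then 0 else if j.val = n - 1 then 1
  else if (j - i).val ≤ k then 1 else 0

lemma fin_sub_add {n : ℕ} (a b : Fin n) (hab : a ≠ b) :
    (a - b).val + (b - a).val = n ∧ 1 ≤ (a - b).val ∧ 1 ≤ (b - a).val := by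
  have ha := a.isLt
  have hb := b.isLt
  have hne : a.val ≠ b.val := fun h => hab (Fin.ext h)
  have e1 : (a - b).val = ((n - b.val) + a.val) % n := by rw [Fin.sub_def]
  have e2 : (b - a).val = ((n - a.val) + b.val) % n := by rw [Fin.sub_def]
  have hm : ∀ x : ℕ, n ≤ x → x < 2*n → x % n = x - n := fun x h1 h2 => by
    rw [Nat.mod_eq_sub_mod h1, Nat.mod_eq_of_lt (by omega)]
  rcases Nat.lt_or_ge a.val b.val with h | h
  · rw [e1, e2, Nat.mod_eq_of_lt (by omega), hm _ (by omega) (by omega)]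
    omega
  · have h' : b.val < a.val := by omega
    rw [e1, e2, hm _ (by omega) (by omega), Nat.mod_eq_of_lt (by omega)]
    omega

lemma rotM_tour {n k : ℕ} (h : n = 2*k+1) : IsTournament (rotM n k) := by
  constructor
  · intro i j; unfold rotM; split_ifs <;> simp
  · funext i j
    simp only [Matrix.add_apply, Matrix.transpose_apply, Matrix.of_apply]
    by_cases hij : i = j
    · subst hij; simp [rotM]
    · rw [if_neg hij]
      have hji : ¬ j = i := fun hh => hij hh.symm
      have hvij : i.val ≠ j.val := fun hh => hij (Fin.ext hh)
      have hi' := i.isLt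
      have hj' := j.isLt
      by_cases hi1 : i.val = n - 1
      · have hj1 : ¬ j.val = n - 1 := by omega
        simp [rotM, hij, hji, hi1, hj1]
      · by_cases hj1 : j.val = n - 1
        · simp [rotM, hij, hji, hi1, hj1]
        · obtain ⟨hsum, ha1, hb1⟩ := fin_sub_add j i hji
          simp only [rotM, if_neg hij, if_neg hji, if_neg hi1, if_neg hj1]
          split_ifs with w1 w2 <;> omega

lemma rotM_det {n k : ℕ} (h : n = 2*k+1) : (rotM n k).det = 0 := by
  apply Matrix.det_eq_zero_of_row_eq_zero (⟨n-1, by omega⟩ : Fin n)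
  intro j
  simp [rotM]

lemma card_val_Icc {n : ℕ} [NeZero n] (lo hi : ℕ) (hhi : hi < n) :
    ((Finset.univ.filter (fun d : Fin n => lo ≤ d.val ∧ d.val ≤ hi)).card) = hi + 1 - lo := by
  rw [← Nat.card_Icc lo hi]
  refine Finset.card_nbij' (fun d => d.val)
    (fun t => ⟨t % n, Nat.mod_lt _ (Nat.pos_of_ne_zero (NeZero.ne n))⟩) ?_ ?_ ?_ ?_
  · intro a ha
    simp only [Finset.mem_coe, Finset.mem_filter, Finset.mem_univ, true_and] at ha
    simp [Finset.mem_Icc, ha.1, ha.2]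
  · intro t ht
    simp only [Finset.mem_coe, Finset.mem_Icc] at ht
    simp only [Finset.mem_coe, Finset.mem_filter, Finset.mem_univ, true_and]
    rw [Nat.mod_eq_of_lt (show t < n by omega)]
    omega
  · intro a _
    apply Fin.ext
    simp [Nat.mod_eq_of_lt a.isLt]
  · intro t ht
    simp only [Finset.mem_coe, Finset.mem_Icc] at ht
    simp [Nat.mod_eq_of_lt (show t < n by omega)]

lemma rotM_s2 {n k : ℕ} (h : n = 2*k+1) :
    ∑ i : Fin n, ((∑ j, rotM n k i j) * (∑ j, rotM n k i j) - (∑ j, rotM n k i j))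
      = 2 * (k:ℤ)^3 := by
  haveI : NeZero n := ⟨by omega⟩
  set L : Fin n := ⟨n-1, by omega⟩ with hLdef
  have hLval : L.val = n - 1 := rfl
  have hcount1 : ((Finset.univ.filter (fun d : Fin n => 1 ≤ d.val ∧ d.val ≤ k)).card) = k := by
    rw [card_val_Icc 1 k (by omega)]
    omega
  have hcount2 : ((Finset.univ.filter
      (fun d : Fin n => k+1 ≤ d.val ∧ d.val ≤ 2*k)).card) = k := by
    rw [card_val_Icc (k+1) (2*k) (by omega)]
    omega
  have hvz : ∀ d : Fin n, d.val = 0 ↔ d = 0 := by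
    intro d
    constructor
    · intro hd; exact Fin.ext (by simp [hd])
    · intro hd; simp [hd]
  have hscoreL : (∑ j, rotM n k L j) = 0 := by
    apply Finset.sum_eq_zero; intro j _
    simp [rotM, hLval]
  have hscore : ∀ i : Fin n, i ≠ L →
      (∑ j, rotM n k i j) = if (L - i).val ≤ k then (k:ℤ) else (k:ℤ)+1 := by
    intro i hi
    have hival : i.val ≠ n - 1 := fun hh => hi (Fin.ext (by rw [hh, hLval]))
    have hLsub0 : L - i ≠ 0 := sub_ne_zero.mpr (Ne.symm hi)
    have hre : (∑ j, rotM n k i j) = ∑ d : Fin n, rotM n k i (d + i) :=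
      (Fintype.sum_equiv (Equiv.addRight i) (fun d => rotM n k i (d + i))
        (fun j => rotM n k i j) (fun d => rfl)).symm
    have hentry : ∀ d : Fin n, rotM n k i (d + i)
        = if d = 0 then 0 else if d = L - i then 1 else if d.val ≤ k then 1 else 0 := by
      intro d
      by_cases hd0 : d = 0
      · subst hd0; simp [rotM]
      · rw [if_neg hd0]
        by_cases hdL : d = L - i
        · rw [if_pos hdL, hdL, sub_add_cancel]
          simp [rotM, hi, hival, hLval]
        · rw [if_neg hdL]
          have c1 : ¬ i = d + i := fun hh => hd0 (right_eq_add.mp hh)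
          have c3 : ¬ (d + i).val = n - 1 := by
            intro hh
            apply hdL
            have hdi : d + i = L := Fin.ext (by rw [hh, hLval])
            exact eq_sub_of_add_eq hdi
          simp only [rotM, if_neg c1, if_neg hival, if_neg c3, add_sub_cancel_right]
    rw [hre, Finset.sum_congr rfl fun d _ => hentry d]
    by_cases hLi : (L - i).val ≤ k
    · rw [if_pos hLi]
      have hpt : ∀ d : Fin n,
          (if d = 0 then (0:ℤ) else if d = L - i then 1 else if d.val ≤ k then 1 else 0)
          = if 1 ≤ d.val ∧ d.val ≤ k then 1 else 0 := by
        intro d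
        by_cases h1 : d = 0
        · simp [h1]
        · rw [if_neg h1]
          have hd1 : 1 ≤ d.val := Nat.one_le_iff_ne_zero.mpr (fun hh => h1 ((hvz d).mp hh))
          by_cases h2 : d = L - i
          · rw [if_pos h2, if_pos ⟨hd1, by rw [h2]; exact hLi⟩]
          · rw [if_neg h2]
            by_cases h3 : d.val ≤ k
            · rw [if_pos h3, if_pos ⟨hd1, h3⟩]
            · rw [if_neg h3, if_neg (fun hc => h3 hc.2)]
      rw [Finset.sum_congr rfl fun d _ => hpt d, Finset.sum_boole, hcount1]
    · rw [if_neg hLi]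
      have hpt : ∀ d : Fin n,
          (if d = 0 then (0:ℤ) else if d = L - i then 1 else if d.val ≤ k then 1 else 0)
          = (if d = L - i then 1 else 0) + (if 1 ≤ d.val ∧ d.val ≤ k then 1 else 0) := by
        intro d
        by_cases h1 : d = 0
        · subst h1
          rw [if_pos rfl, if_neg (fun hh => hLsub0 hh.symm), if_neg (by simp)]
          norm_num
        · rw [if_neg h1]
          have hd1 : 1 ≤ d.val := Nat.one_le_iff_ne_zero.mpr (fun hh => h1 ((hvz d).mp hh))
          by_cases h2 : d = L - i
          · rw [if_pos h2, if_pos h2, if_neg (by rw [h2]; exact fun hc => hLi hc.2)]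
            norm_num
          · rw [if_neg h2, if_neg h2]
            by_cases h3 : d.val ≤ k
            · rw [if_pos h3, if_pos ⟨hd1, h3⟩]; norm_num
            · rw [if_neg h3, if_neg (fun hc => h3 hc.2)]; norm_num
      rw [Finset.sum_congr rfl fun d _ => hpt d, Finset.sum_add_distrib,
        Finset.sum_ite_eq' Finset.univ (L - i) (fun _ => (1:ℤ)), Finset.sum_boole, hcount1]
      simp only [Finset.mem_univ, if_pos]
      ring
  have hre2 : ∑ i : Fin n, ((∑ j, rotM n k i j) * (∑ j, rotM n k i j) - (∑ j, rotM n k i j))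
      = ∑ d : Fin n, ((∑ j, rotM n k (L - d) j) * (∑ j, rotM n k (L - d) j)
          - (∑ j, rotM n k (L - d) j)) :=
    (Fintype.sum_equiv (Equiv.subLeft L)
      (fun d => (∑ j, rotM n k (L - d) j) * (∑ j, rotM n k (L - d) j)
          - (∑ j, rotM n k (L - d) j))
      (fun i => (∑ j, rotM n k i j) * (∑ j, rotM n k i j) - (∑ j, rotM n k i j))
      (fun d => rfl)).symm
  rw [hre2]
  have hpt2 : ∀ d : Fin n,
      ((∑ j, rotM n k (L - d) j) * (∑ j, rotM n k (L - d) j) - (∑ j, rotM n k (L - d) j))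
      = (if 1 ≤ d.val ∧ d.val ≤ k then ((k:ℤ) * k - k) else 0)
        + (if k+1 ≤ d.val ∧ d.val ≤ 2*k then (((k:ℤ)+1) * ((k:ℤ)+1) - ((k:ℤ)+1)) else 0) := by
    intro d
    by_cases hd0 : d = 0
    · subst hd0
      rw [sub_zero, hscoreL]
      simp
    · have hdL : L - d ≠ L := fun hh => hd0 (sub_eq_self.mp hh)
      rw [hscore (L - d) hdL, sub_sub_cancel]
      have hd1 : 1 ≤ d.val := Nat.one_le_iff_ne_zero.mpr (fun hh => hd0 ((hvz d).mp hh))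
      have hdlt : d.val < n := d.isLt
      by_cases h3 : d.val ≤ k
      · rw [if_pos h3, if_pos ⟨hd1, h3⟩, if_neg (by intro hc; omega)]
        ring
      · rw [if_neg h3, if_neg (fun hc => h3 hc.2), if_pos ⟨by omega, by omega⟩]
        ring
  rw [Finset.sum_congr rfl fun d _ => hpt2 d, Finset.sum_add_distrib]
  have hs1 : ∑ d : Fin n, (if 1 ≤ d.val ∧ d.val ≤ k then ((k:ℤ) * k - k) else 0)
      = ((k:ℤ) * k - k) * k := by
    rw [Finset.sum_congr rfl (fun d (_ : d ∈ Finset.univ) =>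
      (by split_ifs <;> ring :
        (if 1 ≤ d.val ∧ d.val ≤ k then ((k:ℤ) * k - k) else 0)
          = ((k:ℤ) * k - k) * (if 1 ≤ d.val ∧ d.val ≤ k then 1 else 0)))]
    rw [← Finset.mul_sum, Finset.sum_boole, hcount1]
  have hs2 : ∑ d : Fin n, (if k+1 ≤ d.val ∧ d.val ≤ 2*k
        then (((k:ℤ)+1) * ((k:ℤ)+1) - ((k:ℤ)+1)) else 0)
      = (((k:ℤ)+1) * ((k:ℤ)+1) - ((k:ℤ)+1)) * k := by
    rw [Finset.sum_congr rfl (fun d (_ : d ∈ Finset.univ) =>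
      (by split_ifs <;> ring :
        (if k+1 ≤ d.val ∧ d.val ≤ 2*k then (((k:ℤ)+1) * ((k:ℤ)+1) - ((k:ℤ)+1)) else 0)
          = (((k:ℤ)+1) * ((k:ℤ)+1) - ((k:ℤ)+1)) * (if k+1 ≤ d.val ∧ d.val ≤ 2*k then 1 else 0)))]
    rw [← Finset.mul_sum, Finset.sum_boole, hcount2]
  rw [hs1, hs2]
  ring

lemma six_choose_three (n : ℕ) :
    ((n.choose 3 * 6 : ℕ) : ℤ) = (n:ℤ) * ((n:ℤ)-1) * ((n:ℤ)-2) := by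
  rcases Nat.lt_or_ge n 3 with h3 | h3
  · interval_cases n <;> simp [Nat.choose]
  · have hd : n.descFactorial 3 = (n-2) * ((n-1) * n) := by simp [Nat.descFactorial]
    have h6 : n.choose 3 * 6 = (n-2) * ((n-1) * n) := by
      have hf : Nat.factorial 3 = 6 := rfl
      rw [Nat.choose_eq_descFactorial_div_factorial, hf,
        Nat.div_mul_cancel (by rw [← hf]; exact Nat.factorial_dvd_descFactorial n 3), hd]
    rw [h6]
    push_cast [Nat.cast_sub (show 2 ≤ n by omega), Nat.cast_sub (show 1 ≤ n by omega)]
    ring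

theorem stmt6 (n : ℕ) (hn : Odd n) :
    (∀ M : Matrix (Fin n) (Fin n) ℤ, IsTournament M → M.det = 0 →
      4 * C3 M ≤ n.choose 3) ∧
    (∃ M : Matrix (Fin n) (Fin n) ℤ, IsTournament M ∧ M.det = 0 ∧
      2 * ((n + 1) / 2).choose 3 ≤ C3 M) := by
  constructor
  · -- Shader's inequality
    intro M hT hdet
    have hid := tour_identity M hT
    simp only [Fintype.card_fin] at hid
    have hsh := shader M hT hdet
    set N : ℕ := (Finset.univ.filter (fun p : Fin n × Fin n × Fin n =>
      M p.1 p.2.1 = 1 ∧ M p.2.1 p.2.2 = 1 ∧ M p.2.2 p.1 = 1)).card with hN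
    have hA2 : 2 * ∑ i, ∑ j, M i j = (n:ℤ) * ((n:ℤ) - 1) := by
      simpa [Fintype.card_fin] using tour_score_sum hT
    have hsub : ∑ i, ((∑ j, M i j) * (∑ j, M i j) - (∑ j, M i j))
        = (∑ i, (∑ j, M i j) * (∑ j, M i j)) - ∑ i, ∑ j, M i j :=
      Finset.sum_sub_distrib _ _
    rw [hsub] at hid
    have hr : 4 * ((n:ℤ) * ((n:ℤ)-1) * ((n:ℤ)-2)) - 3 * ((n:ℤ) * (n:ℤ) * ((n:ℤ)-1))
        + 6 * ((n:ℤ) * ((n:ℤ)-1)) = (n:ℤ) * ((n:ℤ)-1) * ((n:ℤ)-2) := by ring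
    have key : 8 * (N:ℤ) ≤ (n:ℤ) * ((n:ℤ)-1) * ((n:ℤ)-2) := by linarith
    have key2 : 8 * N ≤ n.choose 3 * 6 := by
      have h := (six_choose_three n).symm ▸ key
      exact_mod_cast h
    show 4 * (N / 3) ≤ n.choose 3
    omega
  · -- the construction
    obtain ⟨k, hk⟩ := hn
    refine ⟨rotM n k, rotM_tour hk, rotM_det hk, ?_⟩
    have hid := tour_identity (rotM n k) (rotM_tour hk)
    rw [rotM_s2 hk] at hid
    simp only [Fintype.card_fin] at hid
    set N : ℕ := (Finset.univ.filter (fun p : Fin n × Fin n × Fin n =>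
      rotM n k p.1 p.2.1 = 1 ∧ rotM n k p.2.1 p.2.2 = 1 ∧ rotM n k p.2.2 p.1 = 1)).card with hN
    have hncast : (n:ℤ) = 2 * (k:ℤ) + 1 := by exact_mod_cast congrArg (Nat.cast : ℕ → ℤ) hk
    rw [hncast] at hid
    have hNval : (N:ℤ) = (k:ℤ)^3 - (k:ℤ) := by
      have hexp : (2*(k:ℤ)+1) * ((2*(k:ℤ)+1) - 1) * ((2*(k:ℤ)+1) - 2)
          = 8*(k:ℤ)^3 - 2*(k:ℤ) := by ring
      linarith
    have hhalf : (n + 1) / 2 = k + 1 := by omega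
    rw [hhalf]
    have hc2 : (((k+1).choose 3 * 6 : ℕ) : ℤ) = (k:ℤ)^3 - (k:ℤ) := by
      rw [six_choose_three (k+1)]
      push_cast
      ring
    have hNnat : N = (k+1).choose 3 * 6 := by
      have := hNval.trans hc2.symm
      exact_mod_cast this
    show 2 * (k+1).choose 3 ≤ N / 3
    omega
end

section
/- Every upset tournament of order n has exactly n-2 directed 3-cycles. -/
open scoped Classical

lemma sum_range_add_one' (m : ℕ) :
    2 * ∑ k ∈ Finset.range m, ((k : ℤ) + 1) = (m : ℤ) * (m + 1) := by
  induction m with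
  | zero => simp
  | succ m ih =>
    rw [Finset.sum_range_succ]
    push_cast
    push_cast at ih
    linear_combination ih

lemma sum_range_add_one_sq' (m : ℕ) :
    6 * ∑ k ∈ Finset.range m, ((k : ℤ) + 1) ^ 2 = (m : ℤ) * (m + 1) * (2 * m + 1) := by
  induction m with
  | zero => simp
  | succ m ih =>
    rw [Finset.sum_range_succ]
    push_cast
    push_cast at ih
    linear_combination ih

theorem stmt10 (n : ℕ) (M : Matrix (Fin n) (Fin n) ℤ) (hM : IsUpset M) :
    C3 M = n - 2 := by
  obtain ⟨⟨h01, hsum⟩, hn, hscore⟩ := hM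
  simp only [Fintype.card_fin] at hn hscore
  have hkey : ∀ i j, M i j + M j i = if i = j then 0 else 1 := by
    intro i j
    have := congrFun (congrFun hsum i) j
    simpa [Matrix.add_apply, Matrix.transpose_apply] using this
  have hmul0 : ∀ i j, M i j * M j i = 0 := by
    intro i j
    rcases h01 i j with h | h <;> rcases h01 j i with h' | h' <;> simp [h, h']
    have := hkey i j
    rw [h, h'] at this
    split_ifs at this <;> norm_num at this
  have hsq : ∀ i j, M i j * M i j = M i j := by
    intro i j; rcases h01 i j with h | h <;> simp [h]
  set s : Fin n → ℤ := fun i => ∑ j, M i j with hs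
  have hscast : ∀ i, (score M i : ℤ) = s i := by
    intro i
    have h0 : (0:ℤ) ≤ s i := Finset.sum_nonneg fun j _ => by
      rcases h01 i j with h | h <;> simp [h]
    simp [score, Int.toNat_of_nonneg h0, hs]
    exact h0
  have hcol : ∀ i, ∑ j, M j i = (n : ℤ) - 1 - s i := by
    intro i
    have h1 : ∑ j, (M i j + M j i) = (n : ℤ) - 1 := by
      have e : ∀ j, (if i = j then (0:ℤ) else 1) = 1 - (if i = j then 1 else 0) := by
        intro j; split_ifs <;> ring
      simp only [hkey, e, Finset.sum_sub_distrib, Finset.sum_const, Finset.card_univ,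
        Fintype.card_fin, Finset.sum_ite_eq, Finset.mem_univ, if_true]
      push_cast; ring
    rw [Finset.sum_add_distrib] at h1
    have : s i + ∑ j, M j i = (n:ℤ) - 1 := h1
    linarith
  set T : ℤ := ∑ i, ∑ j, ∑ k, M i j * M j k * M k i with hT
  set U : ℤ := ∑ i, ∑ j, ∑ k, M i j * M k j * M k i with hU
  set S₁ : ℤ := ∑ i, s i with hS₁
  set S₂ : ℤ := ∑ i, s i * s i with hS₂
  -- Step 1 : T = (n-1)*S₁ - S₂ - U
  have e1 : T = ((n:ℤ) - 1) * S₁ - S₂ - U := by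
    have step : T = (∑ i, ∑ j, ((∑ k, M i j * M k i) - M i j * M j i
        - ∑ k, M i j * M k j * M k i)) := by
      rw [hT]
      refine Finset.sum_congr rfl fun i _ => Finset.sum_congr rfl fun j _ => ?_
      have inner : ∀ k, M i j * M j k * M k i =
          M i j * M k i - (if j = k then M i j * M k i else 0) - M i j * M k j * M k i := by
        intro k
        rw [show M j k = (if j = k then (0:ℤ) else 1) - M k j from
          eq_sub_of_add_eq (hkey j k)]
        split_ifs <;> ring
      rw [Finset.sum_congr rfl fun k _ => inner k, Finset.sum_sub_distrib,
        Finset.sum_sub_distrib, Finset.sum_ite_eq]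
      simp
    rw [step]
    have step2 : ∀ i j, (∑ k, M i j * M k i) - M i j * M j i
        - ∑ k, M i j * M k j * M k i
        = M i j * ((n:ℤ) - 1 - s i) - ∑ k, M i j * M k j * M k i := by
      intro i j
      rw [hmul0, ← Finset.mul_sum, hcol]
      ring
    rw [Finset.sum_congr rfl fun i _ => Finset.sum_congr rfl fun j _ => step2 i j]
    have step3 : ∀ i, ∑ j, (M i j * ((n:ℤ) - 1 - s i) - ∑ k, M i j * M k j * M k i)
        = s i * ((n:ℤ) - 1 - s i) - ∑ j, ∑ k, M i j * M k j * M k i := by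
      intro i
      rw [Finset.sum_sub_distrib, ← Finset.sum_mul]
    rw [Finset.sum_congr rfl fun i _ => step3 i, Finset.sum_sub_distrib]
    have step4 : ∑ i, s i * ((n:ℤ) - 1 - s i) = ((n:ℤ) - 1) * S₁ - S₂ := by
      rw [hS₁, hS₂, Finset.mul_sum, ← Finset.sum_sub_distrib]
      exact Finset.sum_congr rfl fun i _ => by ring
    rw [step4, hU]
  -- Step 2 : 2*U = S₂ - S₁
  have e2 : 2 * U = S₂ - S₁ := by
    have hswap : U = ∑ i, ∑ j, ∑ k, M j i * M k i * M k j := by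
      rw [hU]; exact Finset.sum_comm
    have twoU : 2 * U = ∑ i, ∑ j, ∑ k,
        ((M i j + M j i) * (M k j * M k i)) := by
      rw [two_mul]
      nth_rewrite 2 [hswap]
      rw [hU, ← Finset.sum_add_distrib]
      refine Finset.sum_congr rfl fun i _ => ?_
      rw [← Finset.sum_add_distrib]
      refine Finset.sum_congr rfl fun j _ => ?_
      rw [← Finset.sum_add_distrib]
      exact Finset.sum_congr rfl fun k _ => by ring
    have inner : ∀ i j k, (M i j + M j i) * (M k j * M k i)
        = M k j * M k i - (if i = j then M k j * M k i else 0) := by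
      intro i j k
      rw [hkey i j]
      split_ifs <;> ring
    rw [twoU, Finset.sum_congr rfl fun i _ => Finset.sum_congr rfl fun j _ =>
      Finset.sum_congr rfl fun k _ => inner i j k]
    have split : ∀ i j, ∑ k, (M k j * M k i - (if i = j then M k j * M k i else 0))
        = (∑ k, M k j * M k i) - (if i = j then ∑ k, M k j * M k i else 0) := by
      intro i j
      rw [Finset.sum_sub_distrib]
      congr 1
      split_ifs <;> simp
    rw [Finset.sum_congr rfl fun i _ => Finset.sum_congr rfl fun j _ => split i j]
    have split2 : ∀ i, ∑ j, ((∑ k, M k j * M k i) - (if i = j then ∑ k, M k j * M k i else 0))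
        = (∑ j, ∑ k, M k j * M k i) - ∑ k, M k i * M k i := by
      intro i
      rw [Finset.sum_sub_distrib, Finset.sum_ite_eq]
      simp
    rw [Finset.sum_congr rfl fun i _ => split2 i, Finset.sum_sub_distrib]
    have part1 : ∑ i, ∑ j, ∑ k, M k j * M k i = S₂ := by
      have h1 : ∀ i, ∑ j, ∑ k, M k j * M k i = ∑ k, s k * M k i := by
        intro i
        rw [Finset.sum_comm]
        refine Finset.sum_congr rfl fun k _ => ?_
        rw [← Finset.sum_mul]
      rw [Finset.sum_congr rfl fun i _ => h1 i, Finset.sum_comm, hS₂]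
      refine Finset.sum_congr rfl fun k _ => ?_
      rw [← Finset.mul_sum]
    have part2 : ∑ i, ∑ k, M k i * M k i = S₁ := by
      rw [Finset.sum_congr rfl fun i _ => Finset.sum_congr rfl fun k _ => hsq k i,
        Finset.sum_comm, hS₁]
    rw [part1, part2]
  -- score sums
  have hsum_f : ∀ f : ℕ → ℤ, ∑ i : Fin n, f (score M i)
      = f 1 + f (n - 2) + ∑ k ∈ Finset.range (n - 2), f (k + 1) := by
    intro f
    have h0 : ∑ i : Fin n, f (score M i)
        = ((Finset.univ.val.map (score M)).map f).sum := by
      rw [Multiset.map_map]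
      rfl
    rw [h0, hscore]
    simp only [Multiset.map_cons, Multiset.sum_cons, Multiset.map_map, Function.comp]
    have : ((Multiset.range (n - 2)).map (fun k => f (k + 1))).sum
        = ∑ k ∈ Finset.range (n - 2), f (k + 1) := by
      rw [Finset.sum]
      rfl
    rw [this]
    ring
  have hcastm : ((n - 2 : ℕ) : ℤ) = (n : ℤ) - 2 := by omega
  have e3 : 2 * S₁ = (n : ℤ) * ((n:ℤ) - 1) := by
    have h1 : S₁ = ∑ i : Fin n, ((score M i : ℤ)) := by
      rw [hS₁]; exact (Finset.sum_congr rfl fun i _ => (hscast i).symm)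
    have h2 := hsum_f (fun x => (x : ℤ))
    rw [h1, h2]
    have h3 : ∑ k ∈ Finset.range (n - 2), (((k + 1 : ℕ)) : ℤ)
        = ∑ k ∈ Finset.range (n - 2), ((k : ℤ) + 1) := by
      push_cast; rfl
    rw [h3]
    have h4 := sum_range_add_one' (n - 2)
    rw [hcastm] at h4
    push_cast [hcastm]
    linarith
  have e4 : 6 * S₂ = 6 + 6 * ((n:ℤ) - 2) ^ 2
      + ((n:ℤ) - 2) * ((n:ℤ) - 1) * (2 * ((n:ℤ) - 2) + 1) := by
    have h1 : S₂ = ∑ i : Fin n, ((score M i : ℤ)) ^ 2 := by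
      rw [hS₂]
      refine Finset.sum_congr rfl fun i _ => ?_
      rw [hscast i]; ring
    have h2 := hsum_f (fun x => (x : ℤ) ^ 2)
    rw [h1, h2]
    have h3 : ∑ k ∈ Finset.range (n - 2), (((k + 1 : ℕ)) : ℤ) ^ 2
        = ∑ k ∈ Finset.range (n - 2), ((k : ℤ) + 1) ^ 2 := by
      push_cast; rfl
    rw [h3]
    have h4 := sum_range_add_one_sq' (n - 2)
    rw [hcastm] at h4
    push_cast [hcastm]
    linarith
  have hTval : T = 3 * ((n : ℤ) - 2) := by
    have h12 : 12 * T = 36 * ((n:ℤ) - 2) := by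
      linear_combination 12 * e1 - 6 * e2 + (6 * (n:ℤ) - 3) * e3 - 3 * e4
    linarith
  -- conclude
  have hcard : ∀ (inst : DecidablePred fun p : Fin n × Fin n × Fin n =>
      M p.1 p.2.1 = 1 ∧ M p.2.1 p.2.2 = 1 ∧ M p.2.2 p.1 = 1),
      (Finset.filter (fun p : Fin n × Fin n × Fin n =>
        M p.1 p.2.1 = 1 ∧ M p.2.1 p.2.2 = 1 ∧ M p.2.2 p.1 = 1) Finset.univ).card
        = 3 * (n - 2) := by
    intro inst
    have hz : ((Finset.filter (fun p : Fin n × Fin n × Fin n =>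
        M p.1 p.2.1 = 1 ∧ M p.2.1 p.2.2 = 1 ∧ M p.2.2 p.1 = 1) Finset.univ).card : ℤ)
        = T := by
      rw [Finset.card_filter]
      push_cast
      rw [Fintype.sum_prod_type]
      rw [hT]
      refine Finset.sum_congr rfl fun i _ => ?_
      rw [Fintype.sum_prod_type]
      refine Finset.sum_congr rfl fun j _ => Finset.sum_congr rfl fun k _ => ?_
      rcases h01 i j with h | h <;> rcases h01 j k with h' | h' <;>
        rcases h01 k i with h'' | h'' <;> simp [h, h', h'']
    have : ((Finset.filter (fun p : Fin n × Fin n × Fin n =>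
        M p.1 p.2.1 = 1 ∧ M p.2.1 p.2.2 = 1 ∧ M p.2.2 p.1 = 1) Finset.univ).card : ℤ)
        = ((3 * (n - 2) : ℕ) : ℤ) := by
      rw [hz, hTval]
      push_cast
      omega
    exact_mod_cast this
  simp only [C3]
  rw [hcard _]
  omega
end

section
/- If M is a nonsingular tournament matrix of order n ≥ 3, then C_3(M) ≥ n - 2·⌊n/3⌋. -/
open scoped Classical

set_option linter.unusedSectionVars false

section Basics
variable {ι : Type} [Fintype ι] [DecidableEq ι] {M : Matrix ι ι ℤ}

def TReach (M : Matrix ι ι ℤ) (a b : ι) : Prop :=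
  Relation.ReflTransGen (fun x y => M x y = 1) a b

lemma tour_sum (hM : IsTournament M) {i j : ι} (h : i ≠ j) : M i j + M j i = 1 := by
  have := congrFun (congrFun hM.2 i) j
  simpa [Matrix.transpose, if_neg h] using this

lemma tour_diag_s11 (hM : IsTournament M) (i : ι) : M i i = 0 := by
  have := congrFun (congrFun hM.2 i) i
  simp only [Matrix.add_apply, Matrix.transpose_apply, Matrix.of_apply, if_pos rfl] at this
  omega

lemma tour_ne (hM : IsTournament M) {i j : ι} (h : M i j = 1) : i ≠ j := by
  rintro rfl; rw [tour_diag_s11 hM] at h; exact one_ne_zero h.symm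

lemma tour_opp (hM : IsTournament M) {i j : ι} (h : M i j = 1) : M j i = 0 := by
  have hne := tour_ne hM h
  have := tour_sum hM hne
  omega

lemma tour_not (hM : IsTournament M) {i j : ι} (hne : i ≠ j) (h : ¬ M i j = 1) :
    M j i = 1 := by
  have := tour_sum hM hne
  rcases hM.1 i j with h0 | h1
  · omega
  · exact absurd h1 h

lemma reach_closed {W : ι → Prop} (hW : ∀ a b, W a → M a b = 1 → W b) {a b : ι}
    (h : TReach M a b) (ha : W a) : W b := by
  induction h with
  | refl => exact ha
  | tail _ he ih => exact hW _ _ ih he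

/-- Moon: every vertex of a strong tournament on ≥ 2 vertices lies on a 3-cycle. -/
lemma moon (hM : IsTournament M) (hstrong : ∀ a b : ι, TReach M a b)
    (hc : 2 ≤ Fintype.card ι) (v : ι) :
    ∃ a b, M v a = 1 ∧ M a b = 1 ∧ M b v = 1 := by
  by_contra hcon
  push_neg at hcon
  obtain ⟨u, hu⟩ := Fintype.exists_ne_of_one_lt_card (by omega) v
  -- B nonempty : some b₀ with M b₀ v = 1
  obtain ⟨b₀, hb₀⟩ : ∃ b₀, M b₀ v = 1 := by
    rcases (Relation.ReflTransGen.cases_tail (hstrong u v)) with h | ⟨c, _, hc1⟩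
    · exact absurd h.symm hu
    · exact ⟨c, hc1⟩
  have hWclosed : ∀ a b : ι, (a = v ∨ M v a = 1) → M a b = 1 → (b = v ∨ M v b = 1) := by
    rintro a b (rfl | hva) hab
    · exact Or.inr hab
    · by_cases hbv : b = v
      · subst hbv
        exact absurd hab (by rw [tour_opp hM hva]; exact zero_ne_one)
      · right
        by_contra hvb
        exact hcon a b hva hab (tour_not hM (fun h => hbv h.symm) hvb)
  have := reach_closed hWclosed (hstrong v b₀) (Or.inl rfl)
  rcases this with rfl | h1
  · rw [tour_diag_s11 hM] at hb₀; exact one_ne_zero hb₀.symm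
  · have := tour_opp hM h1
    omega

end Basics

section Count
variable {ι : Type} [Fintype ι] [DecidableEq ι]

noncomputable def F3 {ι : Type} [Fintype ι] [DecidableEq ι] (M : Matrix ι ι ℤ) :
    Finset (ι × ι × ι) :=
  Finset.univ.filter (fun p : ι × ι × ι =>
    M p.1 p.2.1 = 1 ∧ M p.2.1 p.2.2 = 1 ∧ M p.2.2 p.1 = 1)

noncomputable def tcnt (M : Matrix ι ι ℤ) (v : ι) : ℕ :=
  (Finset.univ.filter (fun q : ι × ι =>
    M v q.1 = 1 ∧ M q.1 q.2 = 1 ∧ M q.2 v = 1)).card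

variable {M : Matrix ι ι ℤ}

lemma C3_eq (M : Matrix ι ι ℤ) : C3 M = (F3 M).card / 3 := rfl

lemma two_le_tcnt {v a b a' b' : ι}
    (h1 : M v a = 1 ∧ M a b = 1 ∧ M b v = 1)
    (h2 : M v a' = 1 ∧ M a' b' = 1 ∧ M b' v = 1)
    (hne : (a, b) ≠ (a', b')) : 2 ≤ tcnt M v := by
  apply Finset.one_lt_card.2
  exact ⟨(a, b), by simpa [tcnt] using h1, (a', b'), by simpa [tcnt] using h2, hne⟩

lemma one_le_tcnt {v a b : ι} (h1 : M v a = 1 ∧ M a b = 1 ∧ M b v = 1) :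
    1 ≤ tcnt M v :=
  Finset.card_pos.2 ⟨(a, b), by simpa [tcnt] using h1⟩

lemma F3_card_eq_sum (M : Matrix ι ι ℤ) : (F3 M).card = ∑ v, tcnt M v := by
  rw [Finset.card_eq_sum_card_fiberwise
    (f := fun p : ι × ι × ι => p.1) (t := Finset.univ) (fun x _ => Finset.mem_univ _)]
  refine Finset.sum_congr rfl fun v _ => ?_
  refine Finset.card_bij' (fun p _ => p.2) (fun q _ => (v, q)) ?_ ?_ ?_ ?_
  · intro p hp
    simp only [F3, Finset.mem_filter, Finset.mem_univ, true_and] at hp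
    obtain ⟨⟨h1, h2, h3⟩, h4⟩ := hp
    subst h4
    simp [h1, h2, h3]
  · intro q hq
    simp only [Finset.mem_filter, Finset.mem_univ, true_and] at hq
    simp [F3, hq.1, hq.2.1, hq.2.2]
  · intro p hp
    simp only [F3, Finset.mem_filter] at hp
    obtain ⟨a, q⟩ := p
    have h4 : a = v := hp.2
    subst h4
    rfl
  · intro q hq; rfl

lemma F3_rot {p : ι × ι × ι} (hp : p ∈ F3 M) : (p.2.1, p.2.2, p.1) ∈ F3 M := by
  simp only [F3, Finset.mem_filter, Finset.mem_univ, true_and] at hp ⊢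
  tauto

lemma F3_card_dvd (hM : IsTournament M) : (F3 M).card % 3 = 0 := by
  classical
  let e := Fintype.equivFin ι
  let r : ι → ℕ := fun x => (e x : ℕ)
  have hrinj : ∀ {x y : ι}, r x = r y → x = y := by
    intro x y h
    exact e.injective (Fin.ext h)
  let c₀ : ι × ι × ι → Prop := fun p => r p.1 < r p.2.1 ∧ r p.1 < r p.2.2
  let c₁ : ι × ι × ι → Prop := fun p => r p.2.1 < r p.1 ∧ r p.2.1 < r p.2.2
  let c₂ : ι × ι × ι → Prop := fun p => r p.2.2 < r p.1 ∧ r p.2.2 < r p.2.1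
  have hdist : ∀ p ∈ F3 M, p.1 ≠ p.2.1 ∧ p.2.1 ≠ p.2.2 ∧ p.2.2 ≠ p.1 := by
    intro p hp
    simp only [F3, Finset.mem_filter, Finset.mem_univ, true_and] at hp
    exact ⟨tour_ne hM hp.1, tour_ne hM hp.2.1, tour_ne hM hp.2.2⟩
  have hsplit : (F3 M).card =
      ((F3 M).filter c₀).card + (((F3 M).filter c₁).card + ((F3 M).filter c₂).card) := by
    rw [← Finset.card_filter_add_card_filter_not (s := F3 M) c₀]
    congr 1
    rw [← Finset.card_filter_add_card_filter_not
      (s := (F3 M).filter (fun p => ¬ c₀ p)) c₁]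
    rw [Finset.filter_filter, Finset.filter_filter]
    congr 1
    · congr 1
      apply Finset.filter_congr
      intro p hpF
      have hd := hdist p hpF
      have r1 : r p.1 ≠ r p.2.1 := fun h => hd.1 (hrinj h)
      have r2 : r p.2.1 ≠ r p.2.2 := fun h => hd.2.1 (hrinj h)
      have r3 : r p.2.2 ≠ r p.1 := fun h => hd.2.2 (hrinj h)
      simp only [c₀, c₁]
      constructor
      · exact fun h => h.2
      · intro h
        exact ⟨by omega, h⟩
    · congr 1
      apply Finset.filter_congr
      intro p hpF
      have hd := hdist p hpF
      have r1 : r p.1 ≠ r p.2.1 := fun h => hd.1 (hrinj h)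
      have r2 : r p.2.1 ≠ r p.2.2 := fun h => hd.2.1 (hrinj h)
      have r3 : r p.2.2 ≠ r p.1 := fun h => hd.2.2 (hrinj h)
      simp only [c₀, c₁, c₂, not_and, not_lt]
      constructor
      · intro h
        omega
      · intro h
        omega
  have hb1 : ((F3 M).filter c₁).card = ((F3 M).filter c₀).card := by
    refine Finset.card_bij' (fun p _ => (p.2.1, p.2.2, p.1)) (fun p _ => (p.2.2, p.1, p.2.1))
      ?_ ?_ (fun p _ => rfl) (fun p _ => rfl)
    · intro p hp
      rw [Finset.mem_filter] at hp ⊢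
      exact ⟨F3_rot hp.1, hp.2.2, hp.2.1⟩
    · intro p hp
      rw [Finset.mem_filter] at hp ⊢
      exact ⟨F3_rot (F3_rot hp.1), hp.2.2, hp.2.1⟩
  have hb2 : ((F3 M).filter c₂).card = ((F3 M).filter c₁).card := by
    refine Finset.card_bij' (fun p _ => (p.2.1, p.2.2, p.1)) (fun p _ => (p.2.2, p.1, p.2.1))
      ?_ ?_ (fun p _ => rfl) (fun p _ => rfl)
    · intro p hp
      rw [Finset.mem_filter] at hp ⊢
      exact ⟨F3_rot hp.1, hp.2.2, hp.2.1⟩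
    · intro p hp
      rw [Finset.mem_filter] at hp ⊢
      exact ⟨F3_rot (F3_rot hp.1), hp.2.2, hp.2.1⟩
  omega

end Count

section TwoTri
variable {ι : Type} [Fintype ι] [DecidableEq ι] {M : Matrix ι ι ℤ}

lemma prod_ne_snd {a b a' b' : ι} (h : b ≠ b') : (a, b) ≠ (a', b') :=
  fun hh => h (congrArg Prod.snd hh)

lemma two_tri (hM : IsTournament M) (hstrong : ∀ a b : ι, TReach M a b)
    (hc : 4 ≤ Fintype.card ι) :
    ∃ v w, v ≠ w ∧ 2 ≤ tcnt M v ∧ 2 ≤ tcnt M w := by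
  have hne : Nonempty ι := Fintype.card_pos_iff.1 (by omega)
  obtain ⟨x⟩ := hne
  obtain ⟨y, z, hxy, hyz, hzx⟩ := moon hM hstrong (by omega) x
  have hxyne : x ≠ y := tour_ne hM hxy
  have hyzne : y ≠ z := tour_ne hM hyz
  have hzxne : z ≠ x := tour_ne hM hzx
  by_cases hmix : ∃ u, u ≠ x ∧ u ≠ y ∧ u ≠ z ∧
      (M u x = 1 ∨ M u y = 1 ∨ M u z = 1) ∧ (M x u = 1 ∨ M y u = 1 ∨ M z u = 1)
  · obtain ⟨u, hux, huy, huz, hD, hE⟩ := hmix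
    have px : ¬ M u x = 1 → M x u = 1 := fun h => tour_not hM hux h
    have py : ¬ M u y = 1 → M y u = 1 := fun h => tour_not hM huy h
    have pz : ¬ M u z = 1 → M z u = 1 := fun h => tour_not hM huz h
    have qx : M u x = 1 → ¬ M x u = 1 := fun h h' => by
      have := tour_opp hM h; omega
    have qy : M u y = 1 → ¬ M y u = 1 := fun h h' => by
      have := tour_opp hM h; omega
    have qz : M u z = 1 → ¬ M z u = 1 := fun h h' => by
      have := tour_opp hM h; omega
    have hflip : (M u x = 1 ∧ M y u = 1) ∨ (M u y = 1 ∧ M z u = 1) ∨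
        (M u z = 1 ∧ M x u = 1) := by
      by_cases h1 : M u x = 1 <;> by_cases h2 : M u y = 1 <;> by_cases h3 : M u z = 1
      · rcases hE with e | e | e
        · exact absurd e (qx h1)
        · exact absurd e (qy h2)
        · exact absurd e (qz h3)
      · exact Or.inr (Or.inl ⟨h2, pz h3⟩)
      · exact Or.inl ⟨h1, py h2⟩
      · exact Or.inl ⟨h1, py h2⟩
      · exact Or.inr (Or.inr ⟨h3, px h1⟩)
      · exact Or.inr (Or.inl ⟨h2, pz h3⟩)
      · exact Or.inr (Or.inr ⟨h3, px h1⟩)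
      · rcases hD with e | e | e
        · exact absurd e h1
        · exact absurd e h2
        · exact absurd e h3
    rcases hflip with ⟨h1, h2⟩ | ⟨h1, h2⟩ | ⟨h1, h2⟩
    · refine ⟨x, y, hxyne, ?_, ?_⟩
      · exact two_le_tcnt ⟨hxy, hyz, hzx⟩ ⟨hxy, h2, h1⟩ (prod_ne_snd (Ne.symm huz))
      · exact two_le_tcnt ⟨hyz, hzx, hxy⟩ ⟨h2, h1, hxy⟩
          (fun hh => huz (congrArg Prod.fst hh).symm)
    · refine ⟨y, z, hyzne, ?_, ?_⟩
      · exact two_le_tcnt ⟨hyz, hzx, hxy⟩ ⟨hyz, h2, h1⟩ (prod_ne_snd (Ne.symm hux))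
      · exact two_le_tcnt ⟨hzx, hxy, hyz⟩ ⟨h2, h1, hyz⟩
          (fun hh => hux (congrArg Prod.fst hh).symm)
    · refine ⟨z, x, hzxne, ?_, ?_⟩
      · exact two_le_tcnt ⟨hzx, hxy, hyz⟩ ⟨hzx, h2, h1⟩ (prod_ne_snd (Ne.symm huy))
      · exact two_le_tcnt ⟨hxy, hyz, hzx⟩ ⟨h2, h1, hzx⟩
          (fun hh => huy (congrArg Prod.fst hh).symm)
  · push_neg at hmix
    -- every vertex outside the triangle beats all of it or is beaten by all of it
    have hhom : ∀ u, u ≠ x → u ≠ y → u ≠ z →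
        (M u x = 1 ∧ M u y = 1 ∧ M u z = 1) ∨ (M x u = 1 ∧ M y u = 1 ∧ M z u = 1) := by
      intro u h1 h2 h3
      by_cases hD : M u x = 1 ∨ M u y = 1 ∨ M u z = 1
      · left
        have hE := hmix u h1 h2 h3 hD
        refine ⟨?_, ?_, ?_⟩
        · by_contra h; exact absurd (tour_not hM h1 h) hE.1
        · by_contra h; exact absurd (tour_not hM h2 h) hE.2.1
        · by_contra h; exact absurd (tour_not hM h3 h) hE.2.2
      · right
        push_neg at hD
        exact ⟨tour_not hM h1 hD.1, tour_not hM h2 hD.2.1,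
          tour_not hM h3 hD.2.2⟩
    set P : ι → Prop := fun a => a ≠ x ∧ a ≠ y ∧ a ≠ z ∧ M a x = 1 ∧ M a y = 1 ∧ M a z = 1
      with hPdef
    set Q : ι → Prop := fun a => a ≠ x ∧ a ≠ y ∧ a ≠ z ∧ M x a = 1 ∧ M y a = 1 ∧ M z a = 1
      with hQdef
    by_cases hq : ∃ q p, Q q ∧ P p ∧ M q p = 1
    · obtain ⟨q, p, hQq, hPp, hqp⟩ := hq
      have hpq : p ≠ q := by
        intro hh
        subst hh
        have := tour_opp hM hPp.2.2.2.1
        have := hQq.2.2.2.1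
        omega
      refine ⟨p, q, hpq, ?_, ?_⟩
      · exact two_le_tcnt ⟨hPp.2.2.2.1, hQq.2.2.2.1, hqp⟩ ⟨hPp.2.2.2.2.1, hQq.2.2.2.2.1, hqp⟩
          (fun hh => hxyne (congrArg Prod.fst hh))
      · exact two_le_tcnt ⟨hqp, hPp.2.2.2.1, hQq.2.2.2.1⟩ ⟨hqp, hPp.2.2.2.2.1, hQq.2.2.2.2.1⟩
          (prod_ne_snd hxyne)
    · exfalso
      push_neg at hq
      -- there is some vertex outside the triangle
      obtain ⟨u, hu⟩ : ∃ u, u ∉ ({x, y, z} : Finset ι) := by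
        by_contra hall
        push_neg at hall
        have : (Finset.univ : Finset ι) ⊆ {x, y, z} := fun a _ => hall a
        have hle := Finset.card_le_card this
        have h3 : ({x, y, z} : Finset ι).card ≤ 3 := by
          have c1 := Finset.card_insert_le x ({y, z} : Finset ι)
          have c2 := Finset.card_insert_le y ({z} : Finset ι)
          have c3 : ({z} : Finset ι).card = 1 := Finset.card_singleton z
          omega
        rw [Finset.card_univ] at hle
        omega
      simp only [Finset.mem_insert, Finset.mem_singleton, not_or] at hu
      obtain ⟨hu1, hu2, hu3⟩ := hu
      rcases hhom u hu1 hu2 hu3 with hPu | hQu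
      · -- u is in P : the set {x,y,z} ∪ Q is closed under out-edges, and can't reach u
        have hclosed : ∀ a b : ι, (a = x ∨ a = y ∨ a = z ∨ Q a) → M a b = 1 →
            (b = x ∨ b = y ∨ b = z ∨ Q b) := by
          intro a b ha hab
          by_cases hbx : b = x; · exact Or.inl hbx
          by_cases hby : b = y; · exact Or.inr (Or.inl hby)
          by_cases hbz : b = z; · exact Or.inr (Or.inr (Or.inl hbz))
          rcases hhom b hbx hby hbz with hPb | hQb
          · exfalso
            rcases ha with rfl | rfl | rfl | hQa
            · have := tour_opp hM hPb.1; omega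
            · have := tour_opp hM hPb.2.1; omega
            · have := tour_opp hM hPb.2.2; omega
            · exact absurd hab (by
                have := hq a b hQa ⟨hbx, hby, hbz, hPb⟩
                omega)
          · exact Or.inr (Or.inr (Or.inr ⟨hbx, hby, hbz, hQb⟩))
        have := reach_closed hclosed (hstrong x u) (Or.inl rfl)
        rcases this with rfl | rfl | rfl | hQu
        · exact hu1 rfl
        · exact hu2 rfl
        · exact hu3 rfl
        · have := tour_opp hM hPu.1
          have := hQu.2.2.2.1
          omega
      · -- u is in Q : the set Q is closed under out-edges, and can't reach x
        have hclosed : ∀ a b : ι, Q a → M a b = 1 → Q b := by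
          intro a b hQa hab
          by_cases hbx : b = x
          · exfalso; subst hbx; have := tour_opp hM hQa.2.2.2.1; omega
          by_cases hby : b = y
          · exfalso; subst hby; have := tour_opp hM hQa.2.2.2.2.1; omega
          by_cases hbz : b = z
          · exfalso; subst hbz; have := tour_opp hM hQa.2.2.2.2.2; omega
          rcases hhom b hbx hby hbz with hPb | hQb
          · exact absurd hab (by
              have := hq a b hQa ⟨hbx, hby, hbz, hPb⟩
              omega)
          · exact ⟨hbx, hby, hbz, hQb⟩
        have := reach_closed hclosed (hstrong u x)
          ⟨hu1, hu2, hu3, hQu.1, hQu.2.1, hQu.2.2⟩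
        exact this.1 rfl

end TwoTri

section StrongBound
variable {ι : Type} [Fintype ι] [DecidableEq ι] {M : Matrix ι ι ℤ}

lemma strong_bound (hM : IsTournament M) (hstrong : ∀ a b : ι, TReach M a b)
    (h3 : 3 ≤ Fintype.card ι) :
    Fintype.card ι - 2 * (Fintype.card ι / 3) ≤ C3 M := by
  have hsum : (F3 M).card = ∑ v, tcnt M v := F3_card_eq_sum M
  have h1 : ∀ v : ι, 1 ≤ tcnt M v := by
    intro v
    obtain ⟨a, b, ha, hb, hc⟩ := moon hM hstrong (by omega) v
    exact one_le_tcnt ⟨ha, hb, hc⟩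
  have hone : ∀ (s : Finset ι), s.card ≤ ∑ v ∈ s, tcnt M v := by
    intro s
    calc s.card = ∑ v ∈ s, 1 := by simp
    _ ≤ ∑ v ∈ s, tcnt M v := Finset.sum_le_sum (fun v _ => h1 v)
  have hn : Fintype.card ι ≤ (F3 M).card := by
    rw [hsum, ← Finset.card_univ]
    exact hone Finset.univ
  have hmod := F3_card_dvd hM
  have hC3 : C3 M = (F3 M).card / 3 := C3_eq M
  by_cases h4 : 4 ≤ Fintype.card ι
  · have hex : Fintype.card ι + 2 ≤ (F3 M).card := by
      obtain ⟨v, w, hvw, hv, hw⟩ := two_tri hM hstrong h4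
      have hwmem : w ∈ Finset.univ.erase v :=
        Finset.mem_erase.2 ⟨Ne.symm hvw, Finset.mem_univ w⟩
      have e1 : tcnt M v + ∑ x ∈ Finset.univ.erase v, tcnt M x = ∑ x, tcnt M x :=
        Finset.add_sum_erase _ _ (Finset.mem_univ v)
      have e2 : tcnt M w + ∑ x ∈ (Finset.univ.erase v).erase w, tcnt M x
          = ∑ x ∈ Finset.univ.erase v, tcnt M x :=
        Finset.add_sum_erase _ _ hwmem
      have e3 := hone ((Finset.univ.erase v).erase w)
      have c1 : (Finset.univ.erase v).card = Fintype.card ι - 1 := by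
        rw [Finset.card_erase_of_mem (Finset.mem_univ v), Finset.card_univ]
      have c2 : ((Finset.univ.erase v).erase w).card = Fintype.card ι - 1 - 1 := by
        rw [Finset.card_erase_of_mem hwmem, c1]
      rw [hsum]
      omega
    rw [hC3]
    omega
  · rw [hC3]
    omega

end StrongBound

section Split
variable {ι : Type} [Fintype ι] [DecidableEq ι] {M : Matrix ι ι ℤ}

lemma subm_tournament (hM : IsTournament M) (V : Finset ι) : IsTournament (subm M V) := by
  constructor
  · intro i j; exact hM.1 i.val j.val
  · ext i j
    simp only [Matrix.add_apply, Matrix.transpose_apply, Matrix.of_apply, subm,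
      Matrix.submatrix_apply]
    by_cases h : i = j
    · subst h
      rw [if_pos rfl, tour_diag_s11 hM]
      norm_num
    · rw [if_neg h, tour_sum hM (fun hh => h (Subtype.ext hh))]

lemma det_card_ge (hM : IsTournament M) (hdet : M.det ≠ 0) (h0 : 0 < Fintype.card ι) :
    3 ≤ Fintype.card ι := by
  by_contra hlt
  push_neg at hlt
  interval_cases h : Fintype.card ι
  · -- card = 1
    have e := Fintype.equivFinOfCardEq h
    have hd := Matrix.det_submatrix_equiv_self e.symm M
    rw [Matrix.det_fin_one] at hd
    apply hdet
    rw [← hd]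
    simp only [Matrix.submatrix_apply]
    exact tour_diag_s11 hM _
  · -- card = 2
    have e := Fintype.equivFinOfCardEq h
    have hd := Matrix.det_submatrix_equiv_self e.symm M
    rw [Matrix.det_fin_two] at hd
    apply hdet
    rw [← hd]
    simp only [Matrix.submatrix_apply]
    have h01 : e.symm 0 ≠ e.symm 1 := by
      intro hh
      exact absurd (e.symm.injective hh) (by decide)
    rw [tour_diag_s11 hM, tour_diag_s11 hM]
    rcases hM.1 (e.symm 0) (e.symm 1) with h0' | h1'
    · rw [h0']; ring
    · rw [h1', tour_opp hM h1']; ring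

lemma C3_split (M : Matrix ι ι ℤ) (S : Finset ι) :
    (F3 (subm M S)).card + (F3 (subm M Sᶜ)).card ≤ (F3 M).card := by
  classical
  have key : ∀ (V : Finset ι),
      ((F3 (subm M V)).image
        (fun p => (p.1.val, p.2.1.val, p.2.2.val) : _ → ι × ι × ι)) ⊆ F3 M ∧
      (F3 (subm M V)).card = ((F3 (subm M V)).image
        (fun p => (p.1.val, p.2.1.val, p.2.2.val) : _ → ι × ι × ι)).card ∧
      ∀ q ∈ ((F3 (subm M V)).image
        (fun p => (p.1.val, p.2.1.val, p.2.2.val) : _ → ι × ι × ι)), q.1 ∈ V := by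
    intro V
    refine ⟨?_, ?_, ?_⟩
    · intro q hq
      simp only [Finset.mem_image] at hq
      obtain ⟨p, hp, rfl⟩ := hq
      simp only [F3, subm, Finset.mem_filter, Finset.mem_univ, true_and,
        Matrix.submatrix_apply] at hp ⊢
      exact (Finset.mem_filter.1 hp).2
    · rw [Finset.card_image_of_injective]
      intro p q hpq
      rcases p with ⟨⟨a, ha⟩, ⟨b, hb⟩, ⟨c, hc⟩⟩
      rcases q with ⟨⟨a', ha'⟩, ⟨b', hb'⟩, ⟨c', hc'⟩⟩
      simp only [Prod.ext_iff, Subtype.ext_iff] at hpq ⊢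
      exact hpq
    · intro q hq
      simp only [Finset.mem_image] at hq
      obtain ⟨p, hp, rfl⟩ := hq
      exact p.1.2
  obtain ⟨hsub1, hcard1, hmem1⟩ := key S
  obtain ⟨hsub2, hcard2, hmem2⟩ := key Sᶜ
  rw [hcard1, hcard2, ← Finset.card_union_of_disjoint]
  · exact Finset.card_le_card (Finset.union_subset hsub1 hsub2)
  · rw [Finset.disjoint_left]
    intro q hq1 hq2
    have := hmem1 q hq1
    have := hmem2 q hq2
    simp only [Finset.mem_compl] at *
    tauto

lemma det_split (hM : IsTournament M) (S : Finset ι)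
    (hdom : ∀ s ∈ S, ∀ t, t ∉ S → M s t = 1) :
    M.det = (subm M S).det * (subm M Sᶜ).det := by
  classical
  let eq2 : {x // x ∈ Sᶜ} ≃ {x // ¬ x ∈ S} :=
    Equiv.subtypeEquivRight (fun x => Finset.mem_compl)
  let e : {x // x ∈ S} ⊕ {x // x ∈ Sᶜ} ≃ ι :=
    (Equiv.sumCongr (Equiv.refl _) eq2).trans (Equiv.sumCompl (fun x => x ∈ S))
  have hblock : M.submatrix e e =
      Matrix.fromBlocks (subm M S)
        (Matrix.of fun (i : {x // x ∈ S}) (j : {x // x ∈ Sᶜ}) => M i.val j.val)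
        0 (subm M Sᶜ) := by
    ext i j
    rcases i with i | i <;> rcases j with j | j
    · simp [e, eq2, subm]
    · simp [e, eq2]
    · simp only [Matrix.submatrix_apply, Matrix.fromBlocks_apply₂₁, Matrix.zero_apply,
        Equiv.trans_apply, Equiv.sumCongr_apply, Sum.map_inl, Sum.map_inr, id_eq,
        Equiv.sumCompl_apply_inl, Equiv.sumCompl_apply_inr, e, eq2,
        Equiv.subtypeEquivRight_apply, Equiv.refl_apply]
      have hi : i.val ∉ S := Finset.mem_compl.1 i.2
      have h1 : M j.val i.val = 1 := hdom j.val j.2 i.val hi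
      exact tour_opp hM h1
    · simp [e, eq2, subm]
  have hd := Matrix.det_submatrix_equiv_self e M
  rw [hblock, Matrix.det_fromBlocks_zero₂₁] at hd
  exact hd.symm

end Split

lemma key_induction : ∀ (fuel : ℕ) {ι : Type} [Fintype ι] [DecidableEq ι]
    (M : Matrix ι ι ℤ), Fintype.card ι ≤ fuel → IsTournament M → M.det ≠ 0 →
    3 ≤ Fintype.card ι →
    Fintype.card ι - 2 * (Fintype.card ι / 3) ≤ C3 M := by
  intro fuel
  induction fuel with
  | zero =>
    intro ι _ _ M hle hM hdet h3
    omega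
  | succ fuel ih =>
    intro ι _ _ M hle hM hdet h3
    by_cases hstrong : ∀ a b : ι, TReach M a b
    · exact strong_bound hM hstrong h3
    · push_neg at hstrong
      obtain ⟨i0, j0, hnr⟩ := hstrong
      classical
      set S : Finset ι := Finset.univ.filter (fun u => TReach M u j0) with hSdef
      have hj0 : j0 ∈ S := by
        simp [hSdef]
        exact Relation.ReflTransGen.refl
      have hi0 : i0 ∈ Sᶜ := by
        simp [hSdef]
        exact hnr
      have hdom : ∀ s ∈ S, ∀ t, t ∉ S → M s t = 1 := by
        intro s hs t ht
        simp only [hSdef, Finset.mem_filter, Finset.mem_univ, true_and] at hs ht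
        have hst : s ≠ t := by rintro rfl; exact ht hs
        by_contra h
        exact ht (Relation.ReflTransGen.head (tour_not hM hst h) hs)
      -- determinant factorisation
      have hdetsplit := det_split hM S hdom
      have hdS : (subm M S).det ≠ 0 := fun h => hdet (by rw [hdetsplit, h, zero_mul])
      have hdSc : (subm M Sᶜ).det ≠ 0 := fun h => hdet (by rw [hdetsplit, h, mul_zero])
      -- tournaments
      have htS := subm_tournament hM S
      have htSc := subm_tournament hM Sᶜ
      -- cards
      have hcS : Fintype.card {x // x ∈ S} = S.card := Fintype.card_coe S
      have hcSc : Fintype.card {x // x ∈ Sᶜ} = Sᶜ.card := Fintype.card_coe Sᶜ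
      have hposS : 0 < S.card := Finset.card_pos.2 ⟨j0, hj0⟩
      have hposSc : 0 < Sᶜ.card := Finset.card_pos.2 ⟨i0, hi0⟩
      have h3S : 3 ≤ Fintype.card {x // x ∈ S} :=
        det_card_ge htS hdS (by omega)
      have h3Sc : 3 ≤ Fintype.card {x // x ∈ Sᶜ} :=
        det_card_ge htSc hdSc (by omega)
      have hsumcard : S.card + Sᶜ.card = Fintype.card ι := Finset.card_add_card_compl S
      -- induction hypotheses
      have ih1 := ih (subm M S) (by omega) htS hdS h3S
      have ih2 := ih (subm M Sᶜ) (by omega) htSc hdSc h3Sc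
      -- counting
      have hsplit := C3_split M S
      rw [C3_eq] at ih1 ih2 ⊢
      rw [hcS] at ih1
      rw [hcSc] at ih2
      omega


theorem stmt11 (n : ℕ) (hn : 3 ≤ n) (M : Matrix (Fin n) (Fin n) ℤ)
    (hM : IsTournament M) (hdet : M.det ≠ 0) :
    n - 2 * (n / 3) ≤ C3 M := by
  have := key_induction n M (by simp) hM hdet (by simpa using hn)
  simpa using this
end
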